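/- arXiv:2203.01761 — 11 statements merged into one kernel-verified Lean document; each statement's English description precedes it below -/
import Mathlib

section
/- Let T be a {0,1}-valued random variable and R a real random variable on the same probability space, with P(T=0) > 0 and P(T=1) > 0. Suppose R is conditionally independent of T given X (i.e., for every Borel set B and a.e. x, P(R ∈ B | T=0, X=x) = P(R ∈ B | T=1, X=x)). Let π⋆(x) = P(T=1|X=x)/P(T=0|X=x) and m⋆(θ,x) = P(R ≤ θ | X=x). Then for any θ ∈ ℝ, E[𝟙{T=0} π⋆(X) (𝟙{R ≤ θ} − m⋆(θ,X))] = 0. -/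
open MeasureTheory ProbabilityTheory

/-- Under conditional independence of `R` and `T` given `X` (encoded by the
factorization of the conditional expectation given `σ(X)`), with
`π⋆(x) = P(T=1|X=x)/P(T=0|X=x)` and `m⋆(θ,x) = P(R ≤ θ | X=x)`, for any `θ`,
`E[𝟙{T=0} π⋆(X) (𝟙{R ≤ θ} − m⋆(θ,X))] = 0`. -/
theorem doubly_robust_first_term_zero
    {Ω 𝒳 : Type*} [MeasurableSpace Ω] [MeasurableSpace 𝒳]
    (P : Measure Ω) [IsProbabilityMeasure P]
    (X : Ω → 𝒳) (T : Ω → Bool) (R : Ω → ℝ)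
    (hX : Measurable X) (hT : Measurable T) (hR : Measurable R)
    (hT0 : 0 < P {ω | T ω = false}) (hT1 : 0 < P {ω | T ω = true})
    (e : 𝒳 → ℝ) (m : ℝ → 𝒳 → ℝ)
    (hemeas : Measurable e) (hebd : ∀ x, e x ∈ Set.Icc (0 : ℝ) 1)
    (hmmeas : ∀ θ, Measurable (m θ)) (hmbd : ∀ θ x, m θ x ∈ Set.Icc (0 : ℝ) 1)
    -- `e(x)` is a version of `P(T = 1 | X = x)`
    (he : (fun ω => e (X ω)) =ᵐ[P]
      P[fun ω => (if T ω then (1 : ℝ) else 0) | MeasurableSpace.comap X inferInstance])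
    -- `P(T = 0 | X) > 0` a.e.
    (hepos : ∀ᵐ ω ∂P, e (X ω) < 1)
    -- `m(θ,x)` is a version of `P(R ≤ θ | X = x)`
    (hm : ∀ θ : ℝ, (fun ω => m θ (X ω)) =ᵐ[P]
      P[fun ω => (if R ω ≤ θ then (1 : ℝ) else 0) | MeasurableSpace.comap X inferInstance])
    -- conditional independence of `R` and `T` given `X`
    (hCI : ∀ θ : ℝ,
      P[fun ω => (if T ω then (1 : ℝ) else 0) * (if R ω ≤ θ then (1 : ℝ) else 0)
        | MeasurableSpace.comap X inferInstance]
      =ᵐ[P] fun ω => e (X ω) * m θ (X ω))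
    -- integrability of the odds-ratio `π⋆(X)` on the event `{T = 0}`
    (hπint : Integrable (fun ω => (if T ω then (0 : ℝ) else 1) * (e (X ω) / (1 - e (X ω)))) P)
    (θ : ℝ) :
    ∫ ω, (if T ω then (0 : ℝ) else 1) * (e (X ω) / (1 - e (X ω))) *
        ((if R ω ≤ θ then (1 : ℝ) else 0) - m θ (X ω)) ∂P = 0 := by
  classical
  have hle : MeasurableSpace.comap X inferInstance ≤ (inferInstance : MeasurableSpace Ω) :=
    hX.comap_le
  have hXmG : Measurable[MeasurableSpace.comap X inferInstance] X := fun s hs => ⟨s, hs, rfl⟩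
  have hbddint : ∀ (f : Ω → ℝ), Measurable f → (∀ ω, |f ω| ≤ 1) → Integrable f P := by
    intro f hf hbd
    exact (integrable_const (1 : ℝ)).mono' hf.aestronglyMeasurable
      (Filter.Eventually.of_forall (by simpa [Real.norm_eq_abs] using hbd))
  have hiTm : Measurable fun ω => (if T ω then (1 : ℝ) else 0) :=
    Measurable.ite (hT (measurableSet_singleton true)) measurable_const measurable_const
  have hiRm : Measurable fun ω => (if R ω ≤ θ then (1 : ℝ) else 0) :=
    Measurable.ite (hR measurableSet_Iic) measurable_const measurable_const
  have hiTbd : ∀ ω, |(if T ω then (1:ℝ) else 0)| ≤ 1 := by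
    intro ω; split_ifs <;> norm_num
  have hiRbd : ∀ ω, |(if R ω ≤ θ then (1:ℝ) else 0)| ≤ 1 := by
    intro ω; split_ifs <;> norm_num
  have hmXbd : ∀ ω, |m θ (X ω)| ≤ 1 := by
    intro ω; obtain ⟨h0, h1⟩ := hmbd θ (X ω); rw [abs_le]; constructor <;> linarith
  have hiTint : Integrable (fun ω => (if T ω then (1 : ℝ) else 0)) P := hbddint _ hiTm hiTbd
  have hiRint : Integrable (fun ω => (if R ω ≤ θ then (1 : ℝ) else 0)) P := hbddint _ hiRm hiRbd
  have hmXm : Measurable fun ω => m θ (X ω) := (hmmeas θ).comp hX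
  have hmXint : Integrable (fun ω => m θ (X ω)) P := hbddint _ hmXm hmXbd
  have hTRint : Integrable (fun ω => (if T ω then (1:ℝ) else 0) * (if R ω ≤ θ then (1:ℝ) else 0)) P := by
    refine hbddint _ (hiTm.mul hiRm) fun ω => ?_
    rw [abs_mul]
    calc |(if T ω then (1:ℝ) else 0)| * |(if R ω ≤ θ then (1:ℝ) else 0)| ≤ 1 * 1 :=
      mul_le_mul (hiTbd ω) (hiRbd ω) (abs_nonneg _) zero_le_one
    _ = 1 := by norm_num
  have hmTint : Integrable (fun ω => m θ (X ω) * (if T ω then (1:ℝ) else 0)) P := by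
    refine hbddint _ (hmXm.mul hiTm) fun ω => ?_
    rw [abs_mul]
    calc |m θ (X ω)| * |(if T ω then (1:ℝ) else 0)| ≤ 1 * 1 :=
      mul_le_mul (hmXbd ω) (hiTbd ω) (abs_nonneg _) zero_le_one
    _ = 1 := by norm_num
  have hmXsm : StronglyMeasurable[MeasurableSpace.comap X inferInstance] fun ω => m θ (X ω) :=
    Measurable.stronglyMeasurable ((hmmeas θ).comp hXmG)
  have hgsm : StronglyMeasurable[MeasurableSpace.comap X inferInstance]
      fun ω => e (X ω) / (1 - e (X ω)) :=
    Measurable.stronglyMeasurable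
      ((hemeas.comp hXmG).div ((hemeas.comp hXmG).const_sub 1))
  have hA : P[(fun ω => if R ω ≤ θ then (1:ℝ) else 0) | MeasurableSpace.comap X inferInstance]
      =ᵐ[P] fun ω => m θ (X ω) := (hm θ).symm
  have hB := hCI θ
  have hC : P[(fun ω => m θ (X ω)) | MeasurableSpace.comap X inferInstance]
      = fun ω => m θ (X ω) :=
    condExp_of_stronglyMeasurable hle hmXsm hmXint
  have hD : P[(fun ω => m θ (X ω) * (if T ω then (1:ℝ) else 0)) |
        MeasurableSpace.comap X inferInstance]
      =ᵐ[P] fun ω => m θ (X ω) * e (X ω) := by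
    have h1 : P[(fun ω => m θ (X ω) * (if T ω then (1:ℝ) else 0)) |
          MeasurableSpace.comap X inferInstance]
        =ᵐ[P] fun ω => m θ (X ω) *
          (P[(fun ω => if T ω then (1:ℝ) else 0) | MeasurableSpace.comap X inferInstance]) ω :=
      condExp_mul_of_stronglyMeasurable_left hmXsm hmTint hiTint
    refine h1.trans ?_
    filter_upwards [he] with ω hω
    simp only [← hω]
  have key : P[(fun ω => (if T ω then (0:ℝ) else 1) *
        ((if R ω ≤ θ then (1:ℝ) else 0) - m θ (X ω))) | MeasurableSpace.comap X inferInstance]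
      =ᵐ[P] (fun _ => (0:ℝ)) := by
    have hdec : (fun ω => (if T ω then (0:ℝ) else 1) *
        ((if R ω ≤ θ then (1:ℝ) else 0) - m θ (X ω)))
        = (fun ω => ((if R ω ≤ θ then (1:ℝ) else 0) -
              (if T ω then (1:ℝ) else 0) * (if R ω ≤ θ then (1:ℝ) else 0)) -
            (m θ (X ω) - m θ (X ω) * (if T ω then (1:ℝ) else 0))) := by
      funext ω; by_cases hb : T ω <;> simp [hb]
    rw [hdec]
    have e1 : P[(fun ω => ((if R ω ≤ θ then (1:ℝ) else 0) -
              (if T ω then (1:ℝ) else 0) * (if R ω ≤ θ then (1:ℝ) else 0)) -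
            (m θ (X ω) - m θ (X ω) * (if T ω then (1:ℝ) else 0))) |
          MeasurableSpace.comap X inferInstance]
        =ᵐ[P] fun ω =>
          (P[(fun ω => (if R ω ≤ θ then (1:ℝ) else 0) -
              (if T ω then (1:ℝ) else 0) * (if R ω ≤ θ then (1:ℝ) else 0)) |
            MeasurableSpace.comap X inferInstance]) ω -
          (P[(fun ω => m θ (X ω) - m θ (X ω) * (if T ω then (1:ℝ) else 0)) |
            MeasurableSpace.comap X inferInstance]) ω :=
      condExp_sub (hiRint.sub hTRint) (hmXint.sub hmTint) _
    have e2 : P[(fun ω => (if R ω ≤ θ then (1:ℝ) else 0) -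
          (if T ω then (1:ℝ) else 0) * (if R ω ≤ θ then (1:ℝ) else 0)) |
          MeasurableSpace.comap X inferInstance]
        =ᵐ[P] fun ω =>
          (P[(fun ω => (if R ω ≤ θ then (1:ℝ) else 0)) |
            MeasurableSpace.comap X inferInstance]) ω -
          (P[(fun ω => (if T ω then (1:ℝ) else 0) * (if R ω ≤ θ then (1:ℝ) else 0)) |
            MeasurableSpace.comap X inferInstance]) ω :=
      condExp_sub hiRint hTRint _
    have e3 : P[(fun ω => m θ (X ω) - m θ (X ω) * (if T ω then (1:ℝ) else 0)) |
          MeasurableSpace.comap X inferInstance]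
        =ᵐ[P] fun ω =>
          (P[(fun ω => m θ (X ω)) | MeasurableSpace.comap X inferInstance]) ω -
          (P[(fun ω => m θ (X ω) * (if T ω then (1:ℝ) else 0)) |
            MeasurableSpace.comap X inferInstance]) ω :=
      condExp_sub hmXint hmTint _
    have hCpt : ∀ ω, (P[(fun ω => m θ (X ω)) | MeasurableSpace.comap X inferInstance]) ω
        = m θ (X ω) := fun ω => congrFun hC ω
    filter_upwards [e1, e2, e3, hA, hB, hD] with ω h1 h2 h3 ha hb hd
    simp only [h1, h2, h3, ha, hb, hd, hCpt]
    ring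
  have hFeq : (fun ω => (if T ω then (0:ℝ) else 1) * (e (X ω) / (1 - e (X ω))) *
        ((if R ω ≤ θ then (1:ℝ) else 0) - m θ (X ω)))
      = (fun ω => (e (X ω) / (1 - e (X ω))) *
        ((if T ω then (0:ℝ) else 1) * ((if R ω ≤ θ then (1:ℝ) else 0) - m θ (X ω)))) := by
    funext ω; ring
  have hhint : Integrable (fun ω => (if T ω then (0:ℝ) else 1) *
      ((if R ω ≤ θ then (1:ℝ) else 0) - m θ (X ω))) P := by
    refine hbddint _ ?_ fun ω => ?_
    · exact (Measurable.ite (hT (measurableSet_singleton true)) measurable_const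
        measurable_const).mul (hiRm.sub hmXm)
    · rw [abs_mul]
      have h1 : |(if T ω then (0:ℝ) else 1)| ≤ 1 := by split_ifs <;> norm_num
      have h2 : |(if R ω ≤ θ then (1:ℝ) else 0) - m θ (X ω)| ≤ 1 := by
        obtain ⟨h0, h1'⟩ := hmbd θ (X ω); rw [abs_le]; constructor <;> split_ifs <;> linarith
      calc |(if T ω then (0:ℝ) else 1)| * |(if R ω ≤ θ then (1:ℝ) else 0) - m θ (X ω)| ≤ 1 * 1 :=
        mul_le_mul h1 h2 (abs_nonneg _) zero_le_one
      _ = 1 := by norm_num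
  have hFint : Integrable (fun ω => (e (X ω) / (1 - e (X ω))) *
      ((if T ω then (0:ℝ) else 1) * ((if R ω ≤ θ then (1:ℝ) else 0) - m θ (X ω)))) P := by
    refine hπint.norm.mono' ?_ (Filter.Eventually.of_forall fun ω => ?_)
    · exact (((hemeas.comp hX).div (measurable_const.sub (hemeas.comp hX))).mul
        ((Measurable.ite (hT (measurableSet_singleton true)) measurable_const
          measurable_const).mul (hiRm.sub hmXm))).aestronglyMeasurable
    · have h2 : |(if R ω ≤ θ then (1:ℝ) else 0) - m θ (X ω)| ≤ 1 := by
        obtain ⟨h0, h1'⟩ := hmbd θ (X ω); rw [abs_le]; constructor <;> split_ifs <;> linarith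
      simp only [Real.norm_eq_abs]
      calc |(e (X ω) / (1 - e (X ω))) *
            ((if T ω then (0:ℝ) else 1) * ((if R ω ≤ θ then (1:ℝ) else 0) - m θ (X ω)))|
          = |(if T ω then (0:ℝ) else 1) * (e (X ω) / (1 - e (X ω)))| *
            |(if R ω ≤ θ then (1:ℝ) else 0) - m θ (X ω)| := by
            rw [← abs_mul]; ring_nf
        _ ≤ |(if T ω then (0:ℝ) else 1) * (e (X ω) / (1 - e (X ω)))| * 1 :=
            mul_le_mul_of_nonneg_left h2 (abs_nonneg _)
        _ = |(if T ω then (0:ℝ) else 1) * (e (X ω) / (1 - e (X ω)))| := mul_one _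
  have hmul : P[(fun ω => (e (X ω) / (1 - e (X ω))) *
        ((if T ω then (0:ℝ) else 1) * ((if R ω ≤ θ then (1:ℝ) else 0) - m θ (X ω)))) |
        MeasurableSpace.comap X inferInstance]
      =ᵐ[P] fun ω => (e (X ω) / (1 - e (X ω))) *
        (P[(fun ω => (if T ω then (0:ℝ) else 1) *
          ((if R ω ≤ θ then (1:ℝ) else 0) - m θ (X ω))) |
          MeasurableSpace.comap X inferInstance]) ω :=
    condExp_mul_of_stronglyMeasurable_left hgsm hFint hhint
  have hzero : P[(fun ω => (e (X ω) / (1 - e (X ω))) *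
        ((if T ω then (0:ℝ) else 1) * ((if R ω ≤ θ then (1:ℝ) else 0) - m θ (X ω)))) |
        MeasurableSpace.comap X inferInstance]
      =ᵐ[P] (fun _ => (0:ℝ)) := by
    refine hmul.trans ?_
    filter_upwards [key] with ω hk
    simp only [hk, mul_zero]
  rw [hFeq, ← integral_condExp hle, integral_congr_ae hzero]
  simp
end

section
/- With the setup of the covariate-shift model, define IF(θ,x,r,t;π,m) = 𝟙{t=0} π(x)(𝟙{r ≤ θ} − m(θ,x)) + 𝟙{t=1}(m(θ,x) − (1−α)). If π(x) = π⋆(x) := P(T=1|X=x)/P(T=0|X=x) for all x, then for every θ ∈ ℝ, E[IF(θ,X,R,T;π,m)] = E[P(T=1|X)·(P(R ≤ θ | X) − (1−α))], regardless of the choice of m. -/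
open MeasureTheory ProbabilityTheory

/-- The influence function `IF(θ,x,r,t;π,m)`. -/
noncomputable def IFfun {𝒳 : Type*} (α : ℝ) (π : 𝒳 → ℝ) (m : ℝ → 𝒳 → ℝ)
    (θ : ℝ) (x : 𝒳) (r : ℝ) (t : Bool) : ℝ :=
  (if t then 0 else 1) * π x * ((if r ≤ θ then 1 else 0) - m θ x)
    + (if t then 1 else 0) * (m θ x - (1 - α))

/-- Key lemma: for an `m'`-strongly-measurable `p` and integrable `h` with a known
conditional expectation `k`, `∫ p * h = ∫ p * k`. -/
lemma key_int {Ω : Type*} {m0 : MeasurableSpace Ω} {m' : MeasurableSpace Ω} (hm' : m' ≤ m0)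
    (P : @Measure Ω m0) [IsProbabilityMeasure P] {p h k : Ω → ℝ}
    (hpm : StronglyMeasurable[m'] p)
    (hph : Integrable (fun ω => p ω * h ω) P) (hh : Integrable h P)
    (hk : P[h|m'] =ᵐ[P] k) :
    ∫ ω, p ω * h ω ∂P = ∫ ω, p ω * k ω ∂P := by
  have h1 : P[fun ω => p ω * h ω|m'] =ᵐ[P] p * P[h|m'] :=
    condExp_mul_of_stronglyMeasurable_left hpm hph hh
  have h2 := integral_condExp (μ := P) hm' (f := fun ω => p ω * h ω)
  rw [← h2]
  refine integral_congr_ae ?_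
  filter_upwards [h1, hk] with ω e1 e2
  rw [e1, Pi.mul_apply, e2]

/-- If `π = π⋆ = P(T=1|X=x)/P(T=0|X=x)`, then for every `θ`,
`E[IF(θ,X,R,T;π,m)] = E[P(T=1|X)·(P(R ≤ θ|X) − (1−α))]`, regardless of the choice of `m`. -/
theorem IF_expectation_pi_true
    {Ω 𝒳 : Type*} [MeasurableSpace Ω] [MeasurableSpace 𝒳]
    (P : Measure Ω) [IsProbabilityMeasure P]
    (X : Ω → 𝒳) (T : Ω → Bool) (R : Ω → ℝ)
    (hX : Measurable X) (hT : Measurable T) (hR : Measurable R)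
    (α : ℝ) (hα : α ∈ Set.Ioo (0 : ℝ) 1)
    (e : 𝒳 → ℝ) (mstar : ℝ → 𝒳 → ℝ)
    (hemeas : Measurable e) (hebd : ∀ x, e x ∈ Set.Icc (0 : ℝ) 1)
    (hmsmeas : ∀ θ, Measurable (mstar θ)) (hmsbd : ∀ θ x, mstar θ x ∈ Set.Icc (0 : ℝ) 1)
    -- `e(x)` is a version of `P(T = 1 | X = x)`
    (he : (fun ω => e (X ω)) =ᵐ[P]
      P[fun ω => (if T ω then (1 : ℝ) else 0) | MeasurableSpace.comap X inferInstance])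
    (hepos : ∀ᵐ ω ∂P, e (X ω) < 1)
    -- `mstar(θ,x)` is a version of `P(R ≤ θ | X = x)`
    (hms : ∀ θ : ℝ, (fun ω => mstar θ (X ω)) =ᵐ[P]
      P[fun ω => (if R ω ≤ θ then (1 : ℝ) else 0) | MeasurableSpace.comap X inferInstance])
    -- conditional independence of `R` and `T` given `X`
    (hCI : ∀ θ : ℝ,
      P[fun ω => (if T ω then (1 : ℝ) else 0) * (if R ω ≤ θ then (1 : ℝ) else 0)
        | MeasurableSpace.comap X inferInstance]
      =ᵐ[P] fun ω => e (X ω) * mstar θ (X ω))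
    -- integrability of `π⋆(X)`
    (hπint : Integrable (fun ω => e (X ω) / (1 - e (X ω))) P)
    -- `m` is an arbitrary bounded measurable function
    (m : ℝ → 𝒳 → ℝ) (hmmeas : ∀ θ, Measurable (m θ)) (hmbd : ∃ C, ∀ θ x, |m θ x| ≤ C)
    (θ : ℝ) :
    ∫ ω, IFfun α (fun x => e x / (1 - e x)) m θ (X ω) (R ω) (T ω) ∂P
      = ∫ ω, e (X ω) * (mstar θ (X ω) - (1 - α)) ∂P := by
  obtain ⟨C, hC⟩ := hmbd
  have hm' : MeasurableSpace.comap X inferInstance ≤ ‹MeasurableSpace Ω› := hX.comap_le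
  have hXm' : Measurable[MeasurableSpace.comap X inferInstance] X :=
    Measurable.of_comap_le le_rfl
  set g : Ω → ℝ := fun ω => e (X ω) with hgdef
  set ms : Ω → ℝ := fun ω => mstar θ (X ω) with hmsdef
  set mm : Ω → ℝ := fun ω => m θ (X ω) with hmmdef
  set fT : Ω → ℝ := fun ω => if T ω then (1:ℝ) else 0 with hfTdef
  set fR : Ω → ℝ := fun ω => if R ω ≤ θ then (1:ℝ) else 0 with hfRdef
  set pf : Ω → ℝ := fun ω => e (X ω) / (1 - e (X ω)) with hpfdef
  -- strong measurability w.r.t. the comap σ-algebra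
  have hgm : StronglyMeasurable[MeasurableSpace.comap X inferInstance] g :=
    ((hemeas.comp hXm')).stronglyMeasurable
  have hmsm : StronglyMeasurable[MeasurableSpace.comap X inferInstance] ms :=
    ((hmsmeas θ).comp hXm').stronglyMeasurable
  have hmmm : StronglyMeasurable[MeasurableSpace.comap X inferInstance] mm :=
    ((hmmeas θ).comp hXm').stronglyMeasurable
  have hpfm : StronglyMeasurable[MeasurableSpace.comap X inferInstance] pf :=
    ((hemeas.div (measurable_const.sub hemeas)).comp hXm').stronglyMeasurable
  -- ambient measurability
  have hfTmeas : Measurable fT := by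
    rw [hfTdef]
    exact Measurable.ite (hT (measurableSet_singleton true)) measurable_const measurable_const
  have hfRmeas : Measurable fR := by
    rw [hfRdef]
    exact Measurable.ite (measurableSet_le hR measurable_const) measurable_const measurable_const
  -- integrability of bounded measurable functions
  have bint : ∀ (f : Ω → ℝ), Measurable f → ∀ Cf : ℝ, (∀ ω, |f ω| ≤ Cf) → Integrable f P :=
    fun f hf Cf hCf => (integrable_const (μ := P) Cf).mono' hf.aestronglyMeasurable
      (Filter.Eventually.of_forall fun ω => by simpa using hCf ω)
  have hfTbd : ∀ ω, |fT ω| ≤ 1 := by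
    intro ω; rw [hfTdef]; dsimp only; split <;> simp
  have hfRbd : ∀ ω, |fR ω| ≤ 1 := by
    intro ω; rw [hfRdef]; dsimp only; split <;> simp
  have hgbd : ∀ ω, |g ω| ≤ 1 := fun ω =>
    abs_le.mpr ⟨by linarith [(hebd (X ω)).1], (hebd (X ω)).2⟩
  have hmsbd' : ∀ ω, |ms ω| ≤ 1 := fun ω =>
    abs_le.mpr ⟨by linarith [(hmsbd θ (X ω)).1], (hmsbd θ (X ω)).2⟩
  have hmmbd : ∀ ω, |mm ω| ≤ C := fun ω => hC θ (X ω)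
  have ifT : Integrable fT P := bint _ hfTmeas 1 hfTbd
  have ifR : Integrable fR P := bint _ hfRmeas 1 hfRbd
  have ig : Integrable g P := bint _ (hemeas.comp hX) 1 hgbd
  have ims : Integrable ms P := bint _ ((hmsmeas θ).comp hX) 1 hmsbd'
  have imm : Integrable mm P := bint _ ((hmmeas θ).comp hX) C hmmbd
  -- integrable products with pf
  have bdd_mul_pf : ∀ (q : Ω → ℝ), Measurable q → ∀ Cq : ℝ, (∀ ω, |q ω| ≤ Cq) →
      Integrable (fun ω => pf ω * q ω) P := by
    intro q hq Cq hCq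
    have := hπint.bdd_mul (f := q) hq.aestronglyMeasurable (Filter.Eventually.of_forall fun ω => by simpa using hCq ω)
    exact this.congr (Filter.Eventually.of_forall fun ω => mul_comm _ _)
  have ipfR : Integrable (fun ω => pf ω * fR ω) P := bdd_mul_pf _ hfRmeas 1 hfRbd
  have hfTfRbd : ∀ ω, |fT ω * fR ω| ≤ 1 := by
    intro ω
    rw [abs_mul]
    calc |fT ω| * |fR ω| ≤ 1 * 1 := mul_le_mul (hfTbd ω) (hfRbd ω) (abs_nonneg _) zero_le_one
    _ = 1 := one_mul 1
  have ipfTfR : Integrable (fun ω => pf ω * (fT ω * fR ω)) P :=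
    bdd_mul_pf _ (hfTmeas.mul hfRmeas) 1 hfTfRbd
  have ipfmm : Integrable (fun ω => pf ω * mm ω) P := bdd_mul_pf _ ((hmmeas θ).comp hX) C hmmbd
  have ipfmmfT : Integrable (fun ω => (pf ω * mm ω) * fT ω) P := by
    have := ipfmm.bdd_mul (f := fT) hfTmeas.aestronglyMeasurable
      (Filter.Eventually.of_forall fun ω => by simpa using hfTbd ω)
    exact this.congr (Filter.Eventually.of_forall fun ω => mul_comm _ _)
  have immfT : Integrable (fun ω => mm ω * fT ω) P := by
    have := imm.bdd_mul (f := fT) hfTmeas.aestronglyMeasurable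
      (Filter.Eventually.of_forall fun ω => by simpa using hfTbd ω)
    exact this.congr (Filter.Eventually.of_forall fun ω => mul_comm _ _)
  have icfT : Integrable (fun ω => (1 - α) * fT ω) P := ifT.const_mul _
  have ifTfR : Integrable (fun ω => fT ω * fR ω) P := bint _ (hfTmeas.mul hfRmeas) 1 hfTfRbd
  -- pointwise expansion of the integrand
  have hpt : ∀ ω, IFfun α (fun x => e x / (1 - e x)) m θ (X ω) (R ω) (T ω)
      = ((((pf ω * fR ω - pf ω * (fT ω * fR ω)) - pf ω * mm ω)
          + ((pf ω * mm ω) * fT ω + mm ω * fT ω)) - (1 - α) * fT ω) := by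
    intro ω
    rw [hpfdef, hfTdef, hfRdef, hmmdef]
    cases hTω : T ω <;>
      simp only [IFfun, hTω, Bool.false_eq_true, if_true, if_false] <;> ring
  rw [integral_congr_ae (Filter.Eventually.of_forall hpt)]
  -- split the integral
  have iC : Integrable (fun ω => pf ω * fR ω - pf ω * (fT ω * fR ω)) P := ipfR.sub ipfTfR
  have iB : Integrable (fun ω => (pf ω * fR ω - pf ω * (fT ω * fR ω)) - pf ω * mm ω) P :=
    iC.sub ipfmm
  have iD : Integrable (fun ω => (pf ω * mm ω) * fT ω + mm ω * fT ω) P := ipfmmfT.add immfT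
  have iA : Integrable (fun ω => ((pf ω * fR ω - pf ω * (fT ω * fR ω)) - pf ω * mm ω)
      + ((pf ω * mm ω) * fT ω + mm ω * fT ω)) P := iB.add iD
  rw [integral_sub iA icfT, integral_add iB iD, integral_sub iC ipfmm,
    integral_sub ipfR ipfTfR, integral_add ipfmmfT immfT]
  -- compute each piece via conditional expectation
  have e1 : ∫ ω, pf ω * fR ω ∂P = ∫ ω, pf ω * ms ω ∂P :=
    key_int hm' P hpfm ipfR ifR (hms θ).symm
  have e2 : ∫ ω, pf ω * (fT ω * fR ω) ∂P = ∫ ω, pf ω * (g ω * ms ω) ∂P :=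
    key_int hm' P hpfm ipfTfR ifTfR (hCI θ)
  have e4 : ∫ ω, (pf ω * mm ω) * fT ω ∂P = ∫ ω, (pf ω * mm ω) * g ω ∂P :=
    key_int hm' P (hpfm.mul hmmm) ipfmmfT ifT he.symm
  have e5 : ∫ ω, mm ω * fT ω ∂P = ∫ ω, mm ω * g ω ∂P :=
    key_int hm' P hmmm immfT ifT he.symm
  have e6 : ∫ ω, (1 - α) * fT ω ∂P = ∫ ω, (1 - α) * g ω ∂P :=
    key_int hm' P stronglyMeasurable_const icfT ifT he.symm
  rw [e1, e2, e4, e5, e6]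
  -- the a.e. identity pf * (1 - g) = g
  have hpf_g : ∀ᵐ ω ∂P, pf ω * (1 - g ω) = g ω := by
    filter_upwards [hepos] with ω hω
    rw [hpfdef, hgdef]
    dsimp only
    rw [div_mul_cancel₀]
    exact sub_ne_zero.mpr (ne_of_gt (by linarith))
  -- integrable combos
  have hgmsbd : ∀ ω, |g ω * ms ω| ≤ 1 := by
    intro ω
    rw [abs_mul]
    calc |g ω| * |ms ω| ≤ 1 * 1 := mul_le_mul (hgbd ω) (hmsbd' ω) (abs_nonneg _) zero_le_one
    _ = 1 := one_mul 1
  have igms : Integrable (fun ω => g ω * ms ω) P :=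
    bint _ ((hemeas.comp hX).mul ((hmsmeas θ).comp hX)) 1 hgmsbd
  have ipfgms : Integrable (fun ω => pf ω * (g ω * ms ω)) P :=
    bdd_mul_pf _ ((hemeas.comp hX).mul ((hmsmeas θ).comp hX)) 1 hgmsbd
  have ipfms : Integrable (fun ω => pf ω * ms ω) P := bdd_mul_pf _ ((hmsmeas θ).comp hX) 1 hmsbd'
  have ipfmmg : Integrable (fun ω => (pf ω * mm ω) * g ω) P := by
    have := ipfmm.bdd_mul (f := g) (hemeas.comp hX).aestronglyMeasurable
      (Filter.Eventually.of_forall fun ω => by simpa using hgbd ω)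
    exact this.congr (Filter.Eventually.of_forall fun ω => mul_comm _ _)
  -- first merge: ∫ pf*ms - ∫ pf*(g*ms) = ∫ g*ms
  have m1 : ∫ ω, pf ω * ms ω ∂P - ∫ ω, pf ω * (g ω * ms ω) ∂P = ∫ ω, g ω * ms ω ∂P := by
    rw [← integral_sub ipfms ipfgms]
    refine integral_congr_ae ?_
    filter_upwards [hpf_g] with ω hω
    calc pf ω * ms ω - pf ω * (g ω * ms ω) = (pf ω * (1 - g ω)) * ms ω := by ring
    _ = g ω * ms ω := by rw [hω]
  -- second merge: ∫ pf*mm - ∫ (pf*mm)*g = ∫ mm*g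
  have m2 : ∫ ω, pf ω * mm ω ∂P - ∫ ω, (pf ω * mm ω) * g ω ∂P = ∫ ω, mm ω * g ω ∂P := by
    rw [← integral_sub ipfmm ipfmmg]
    refine integral_congr_ae ?_
    filter_upwards [hpf_g] with ω hω
    calc pf ω * mm ω - (pf ω * mm ω) * g ω = (pf ω * (1 - g ω)) * mm ω := by ring
    _ = mm ω * g ω := by rw [hω]; ring
  -- conclude
  have final : ∫ ω, g ω * ms ω ∂P - ∫ ω, (1 - α) * g ω ∂P
      = ∫ ω, e (X ω) * (mstar θ (X ω) - (1 - α)) ∂P := by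
    rw [← integral_sub igms (ig.const_mul _)]
    refine integral_congr_ae (Filter.Eventually.of_forall fun ω => ?_)
    rw [hgdef, hmsdef]; dsimp only; ring
  linarith [m1, m2, final]
end

section
/- With the setup of the covariate-shift model, define IF(θ,x,r,t;π,m) as above. If m(θ,x) = m⋆(θ,x) := P(R ≤ θ | X=x) for all θ,x, then for every θ ∈ ℝ, E[IF(θ,X,R,T;π,m)] = E[P(T=1|X)·(P(R ≤ θ | X) − (1−α))], regardless of the choice of π. -/
open MeasureTheory ProbabilityTheory

private lemma integrable_of_bdd {Ω : Type*} [MeasurableSpace Ω] {P : Measure Ω}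
    [IsProbabilityMeasure P] {f : Ω → ℝ} (hf : Measurable f) {C : ℝ}
    (h : ∀ ω, |f ω| ≤ C) : Integrable f P :=
  (integrable_const C).mono' hf.aestronglyMeasurable (ae_of_all _ h)

/-- Pull-out key lemma: for bounded measurable `φ : 𝒳 → ℝ` and bounded measurable `g`,
`∫ φ(X)·g = ∫ φ(X)·E[g | σ(X)]`. -/
private lemma key {Ω 𝒳 : Type*} [MeasurableSpace Ω] [MeasurableSpace 𝒳]
    (P : Measure Ω) [IsProbabilityMeasure P] (X : Ω → 𝒳) (hX : Measurable X)
    (φ : 𝒳 → ℝ) (hφ : Measurable φ) {Cφ : ℝ} (hφbd : ∀ x, |φ x| ≤ Cφ)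
    (g : Ω → ℝ) (hg : Measurable g) {Cg : ℝ} (hgbd : ∀ ω, |g ω| ≤ Cg) :
    ∫ ω, φ (X ω) * g ω ∂P
      = ∫ ω, φ (X ω) * (P[g | MeasurableSpace.comap X inferInstance]) ω ∂P := by
  have hmle : MeasurableSpace.comap X inferInstance ≤ ‹MeasurableSpace Ω› := hX.comap_le
  haveI : SigmaFinite (P.trim hmle) := by infer_instance
  have hφX : StronglyMeasurable[MeasurableSpace.comap X inferInstance] (fun ω => φ (X ω)) := by
    have hXm : Measurable[MeasurableSpace.comap X inferInstance] X := fun s hs => ⟨s, hs, rfl⟩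
    exact (hφ.comp hXm).stronglyMeasurable
  have hgint : Integrable g P := integrable_of_bdd hg hgbd
  have hfgint : Integrable (fun ω => φ (X ω) * g ω) P := by
    refine integrable_of_bdd ((hφ.comp hX).mul hg) (C := Cφ * Cg) fun ω => ?_
    rw [abs_mul]
    exact mul_le_mul (hφbd _) (hgbd _) (abs_nonneg _)
      ((abs_nonneg (φ (X ω))).trans (hφbd _))
  have hpull := condExp_mul_of_stronglyMeasurable_left (μ := P) hφX hfgint hgint
  calc ∫ ω, φ (X ω) * g ω ∂P
      = ∫ ω, (P[(fun ω => φ (X ω) * g ω) | MeasurableSpace.comap X inferInstance]) ω ∂P :=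
        (integral_condExp hmle).symm
    _ = ∫ ω, ((fun ω => φ (X ω)) * P[g | MeasurableSpace.comap X inferInstance]) ω ∂P :=
        integral_congr_ae hpull
    _ = ∫ ω, φ (X ω) * (P[g | MeasurableSpace.comap X inferInstance]) ω ∂P := rfl

/-- If `m = m⋆` is the true conditional CDF `P(R ≤ θ | X = x)`, then for every `θ`,
`E[IF(θ,X,R,T;π,m⋆)] = E[P(T=1|X)·(P(R ≤ θ|X) − (1−α))]`, regardless of the choice of `π`. -/
theorem IF_expectation_m_true
    {Ω 𝒳 : Type*} [MeasurableSpace Ω] [MeasurableSpace 𝒳]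
    (P : Measure Ω) [IsProbabilityMeasure P]
    (X : Ω → 𝒳) (T : Ω → Bool) (R : Ω → ℝ)
    (hX : Measurable X) (hT : Measurable T) (hR : Measurable R)
    (α : ℝ) (hα : α ∈ Set.Ioo (0 : ℝ) 1)
    (e : 𝒳 → ℝ) (mstar : ℝ → 𝒳 → ℝ)
    (hemeas : Measurable e) (hebd : ∀ x, e x ∈ Set.Icc (0 : ℝ) 1)
    (hmsmeas : ∀ θ, Measurable (mstar θ)) (hmsbd : ∀ θ x, mstar θ x ∈ Set.Icc (0 : ℝ) 1)
    -- `e(x)` is a version of `P(T = 1 | X = x)`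
    (he : (fun ω => e (X ω)) =ᵐ[P]
      P[fun ω => (if T ω then (1 : ℝ) else 0) | MeasurableSpace.comap X inferInstance])
    (hepos : ∀ᵐ ω ∂P, e (X ω) < 1)
    -- `mstar(θ,x)` is a version of `P(R ≤ θ | X = x)`
    (hms : ∀ θ : ℝ, (fun ω => mstar θ (X ω)) =ᵐ[P]
      P[fun ω => (if R ω ≤ θ then (1 : ℝ) else 0) | MeasurableSpace.comap X inferInstance])
    -- conditional independence of `R` and `T` given `X`
    (hCI : ∀ θ : ℝ,
      P[fun ω => (if T ω then (1 : ℝ) else 0) * (if R ω ≤ θ then (1 : ℝ) else 0)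
        | MeasurableSpace.comap X inferInstance]
      =ᵐ[P] fun ω => e (X ω) * mstar θ (X ω))
    -- `π` is an arbitrary bounded measurable function
    (π : 𝒳 → ℝ) (hπmeas : Measurable π) (hπbd : ∃ C, ∀ x, |π x| ≤ C)
    (θ : ℝ) :
    ∫ ω, IFfun α π mstar θ (X ω) (R ω) (T ω) ∂P
      = ∫ ω, e (X ω) * (mstar θ (X ω) - (1 - α)) ∂P := by
  obtain ⟨Cπ, hCπ⟩ := hπbd
  -- basic measurability / boundedness facts
  have hTi : Measurable (fun ω => if T ω then (1 : ℝ) else 0) :=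
    Measurable.ite (hT (measurableSet_singleton true)) measurable_const measurable_const
  have hRi : Measurable (fun ω => if R ω ≤ θ then (1 : ℝ) else 0) :=
    Measurable.ite (measurableSet_le hR measurable_const) measurable_const measurable_const
  have hTibd : ∀ ω, |(if T ω then (1 : ℝ) else 0)| ≤ 1 := by
    intro ω; split <;> simp
  have hRibd : ∀ ω, |(if R ω ≤ θ then (1 : ℝ) else 0)| ≤ 1 := by
    intro ω; split <;> simp
  have hmsbd' : ∀ x, |mstar θ x| ≤ 1 := fun x =>
    abs_le.2 ⟨by linarith [(hmsbd θ x).1], (hmsbd θ x).2⟩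
  have hebd' : ∀ x, |e x| ≤ 1 := fun x => abs_le.2 ⟨by linarith [(hebd x).1], (hebd x).2⟩
  have hTRi : Measurable (fun ω => (if T ω then (1 : ℝ) else 0) * (if R ω ≤ θ then (1 : ℝ) else 0)) :=
    hTi.mul hRi
  have hTRibd : ∀ ω, |(if T ω then (1 : ℝ) else 0) * (if R ω ≤ θ then (1 : ℝ) else 0)| ≤ 1 := by
    intro ω
    rw [abs_mul]
    exact mul_le_one₀ (hTibd ω) (abs_nonneg _) (hRibd ω)
  -- I1 = ∫ π(X)·1_{R≤θ} = ∫ π(X)·m⋆(X)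
  have I1 : ∫ ω, π (X ω) * (if R ω ≤ θ then (1 : ℝ) else 0) ∂P
      = ∫ ω, π (X ω) * mstar θ (X ω) ∂P := by
    rw [key P X hX π hπmeas hCπ _ hRi hRibd]
    exact integral_congr_ae <| (hms θ).symm.mono fun ω h =>
      congrArg (fun z => π (X ω) * z) h
  -- I3 = ∫ π(X)·(T·1_{R≤θ}) = ∫ π(X)·e(X)·m⋆(X)
  have I3 : ∫ ω, π (X ω) * ((if T ω then (1 : ℝ) else 0) * (if R ω ≤ θ then (1 : ℝ) else 0)) ∂P
      = ∫ ω, π (X ω) * (e (X ω) * mstar θ (X ω)) ∂P := by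
    rw [key P X hX π hπmeas hCπ _ hTRi hTRibd]
    exact integral_congr_ae <| (hCI θ).mono fun ω h =>
      congrArg (fun z => π (X ω) * z) h
  -- I4 = ∫ (π·m⋆)(X)·T = ∫ π(X)·m⋆(X)·e(X)
  have I4 : ∫ ω, (π (X ω) * mstar θ (X ω)) * (if T ω then (1 : ℝ) else 0) ∂P
      = ∫ ω, (π (X ω) * mstar θ (X ω)) * e (X ω) ∂P := by
    rw [key P X hX (fun x => π x * mstar θ x) (hπmeas.mul (hmsmeas θ))
      (Cφ := Cπ * 1) (fun x => by
        rw [abs_mul]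
        exact mul_le_mul (hCπ x) (hmsbd' x) (abs_nonneg _)
          ((abs_nonneg (π x)).trans (hCπ x))) _ hTi hTibd]
    exact integral_congr_ae <| he.symm.mono fun ω h =>
      congrArg (fun z => π (X ω) * mstar θ (X ω) * z) h
  -- I5 = ∫ (m⋆(X)−(1−α))·T = ∫ (m⋆(X)−(1−α))·e(X)
  have I5 : ∫ ω, (mstar θ (X ω) - (1 - α)) * (if T ω then (1 : ℝ) else 0) ∂P
      = ∫ ω, (mstar θ (X ω) - (1 - α)) * e (X ω) ∂P := by
    rw [key P X hX (fun x => mstar θ x - (1 - α)) ((hmsmeas θ).sub measurable_const)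
      (Cφ := 1 + |1 - α|) (fun x =>
        (abs_sub _ _).trans (by linarith [hmsbd' x])) _ hTi hTibd]
    exact integral_congr_ae <| he.symm.mono fun ω h =>
      congrArg (fun z => (mstar θ (X ω) - (1 - α)) * z) h
  -- integrability of all pieces
  have int1 : Integrable (fun ω => π (X ω) * (if R ω ≤ θ then (1 : ℝ) else 0)) P := by
    refine integrable_of_bdd ((hπmeas.comp hX).mul hRi) (C := Cπ * 1) fun ω => ?_
    rw [abs_mul]
    exact mul_le_mul (hCπ _) (hRibd ω) (abs_nonneg _) ((abs_nonneg (π (X ω))).trans (hCπ (X ω)))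
  have int2 : Integrable (fun ω => π (X ω) * mstar θ (X ω)) P := by
    refine integrable_of_bdd ((hπmeas.comp hX).mul ((hmsmeas θ).comp hX)) (C := Cπ * 1) fun ω => ?_
    rw [abs_mul]
    exact mul_le_mul (hCπ _) (hmsbd' _) (abs_nonneg _) ((abs_nonneg (π (X ω))).trans (hCπ (X ω)))
  have int3 : Integrable (fun ω => π (X ω) *
      ((if T ω then (1 : ℝ) else 0) * (if R ω ≤ θ then (1 : ℝ) else 0))) P := by
    refine integrable_of_bdd ((hπmeas.comp hX).mul hTRi) (C := Cπ * 1) fun ω => ?_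
    rw [abs_mul]
    exact mul_le_mul (hCπ _) (hTRibd ω) (abs_nonneg _) ((abs_nonneg (π (X ω))).trans (hCπ (X ω)))
  have int4 : Integrable (fun ω => (π (X ω) * mstar θ (X ω)) * (if T ω then (1 : ℝ) else 0)) P := by
    refine integrable_of_bdd (((hπmeas.comp hX).mul ((hmsmeas θ).comp hX)).mul hTi)
      (C := Cπ * 1 * 1) fun ω => ?_
    rw [abs_mul, abs_mul]
    have h1 : |π (X ω)| * |mstar θ (X ω)| ≤ Cπ * 1 :=
      mul_le_mul (hCπ _) (hmsbd' _) (abs_nonneg _) ((abs_nonneg (π (X ω))).trans (hCπ (X ω)))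
    exact mul_le_mul h1 (hTibd ω) (abs_nonneg _)
      (le_trans (mul_nonneg (abs_nonneg _) (abs_nonneg _)) h1)
  have int5 : Integrable (fun ω => (mstar θ (X ω) - (1 - α)) * (if T ω then (1 : ℝ) else 0)) P := by
    refine integrable_of_bdd ((((hmsmeas θ).comp hX).sub measurable_const).mul hTi)
      (C := (1 + |1 - α|) * 1) fun ω => ?_
    rw [abs_mul]
    exact mul_le_mul ((abs_sub _ _).trans (by linarith [hmsbd' (X ω)])) (hTibd ω)
      (abs_nonneg _) (by positivity)
  -- expand IFfun and conclude
  have hexp : ∀ ω, IFfun α π mstar θ (X ω) (R ω) (T ω)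
      = (π (X ω) * (if R ω ≤ θ then (1 : ℝ) else 0) - π (X ω) * mstar θ (X ω))
        - (π (X ω) * ((if T ω then (1 : ℝ) else 0) * (if R ω ≤ θ then (1 : ℝ) else 0))
            - (π (X ω) * mstar θ (X ω)) * (if T ω then (1 : ℝ) else 0))
        + (mstar θ (X ω) - (1 - α)) * (if T ω then (1 : ℝ) else 0) := by
    intro ω
    simp only [IFfun]
    cases T ω <;> simp only [Bool.false_eq_true, reduceIte] <;> ring
  calc ∫ ω, IFfun α π mstar θ (X ω) (R ω) (T ω) ∂P
      = ∫ ω, ((π (X ω) * (if R ω ≤ θ then (1 : ℝ) else 0) - π (X ω) * mstar θ (X ω))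
        - (π (X ω) * ((if T ω then (1 : ℝ) else 0) * (if R ω ≤ θ then (1 : ℝ) else 0))
            - (π (X ω) * mstar θ (X ω)) * (if T ω then (1 : ℝ) else 0))
        + (mstar θ (X ω) - (1 - α)) * (if T ω then (1 : ℝ) else 0)) ∂P := by
        exact integral_congr_ae (ae_of_all _ hexp)
    _ = ((∫ ω, π (X ω) * (if R ω ≤ θ then (1 : ℝ) else 0) ∂P
          - ∫ ω, π (X ω) * mstar θ (X ω) ∂P)
        - (∫ ω, π (X ω) * ((if T ω then (1 : ℝ) else 0) * (if R ω ≤ θ then (1 : ℝ) else 0)) ∂P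
          - ∫ ω, (π (X ω) * mstar θ (X ω)) * (if T ω then (1 : ℝ) else 0) ∂P))
        + ∫ ω, (mstar θ (X ω) - (1 - α)) * (if T ω then (1 : ℝ) else 0) ∂P := by
        have h1 : ∫ ω, (((π (X ω) * (if R ω ≤ θ then (1 : ℝ) else 0) - π (X ω) * mstar θ (X ω))
            - (π (X ω) * ((if T ω then (1 : ℝ) else 0) * (if R ω ≤ θ then (1 : ℝ) else 0))
              - (π (X ω) * mstar θ (X ω)) * (if T ω then (1 : ℝ) else 0)))
            + (mstar θ (X ω) - (1 - α)) * (if T ω then (1 : ℝ) else 0)) ∂P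
          = (∫ ω, ((π (X ω) * (if R ω ≤ θ then (1 : ℝ) else 0) - π (X ω) * mstar θ (X ω))
            - (π (X ω) * ((if T ω then (1 : ℝ) else 0) * (if R ω ≤ θ then (1 : ℝ) else 0))
              - (π (X ω) * mstar θ (X ω)) * (if T ω then (1 : ℝ) else 0))) ∂P)
            + ∫ ω, (mstar θ (X ω) - (1 - α)) * (if T ω then (1 : ℝ) else 0) ∂P :=
          integral_add ((int1.sub int2).sub (int3.sub int4)) int5
        have h2 : ∫ ω, ((π (X ω) * (if R ω ≤ θ then (1 : ℝ) else 0) - π (X ω) * mstar θ (X ω))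
            - (π (X ω) * ((if T ω then (1 : ℝ) else 0) * (if R ω ≤ θ then (1 : ℝ) else 0))
              - (π (X ω) * mstar θ (X ω)) * (if T ω then (1 : ℝ) else 0))) ∂P
          = (∫ ω, (π (X ω) * (if R ω ≤ θ then (1 : ℝ) else 0) - π (X ω) * mstar θ (X ω)) ∂P)
            - ∫ ω, (π (X ω) * ((if T ω then (1 : ℝ) else 0) * (if R ω ≤ θ then (1 : ℝ) else 0))
              - (π (X ω) * mstar θ (X ω)) * (if T ω then (1 : ℝ) else 0)) ∂P :=
          integral_sub (int1.sub int2) (int3.sub int4)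
        have h3 : ∫ ω, (π (X ω) * (if R ω ≤ θ then (1 : ℝ) else 0)
              - π (X ω) * mstar θ (X ω)) ∂P
          = (∫ ω, π (X ω) * (if R ω ≤ θ then (1 : ℝ) else 0) ∂P)
            - ∫ ω, π (X ω) * mstar θ (X ω) ∂P := integral_sub int1 int2
        have h4 : ∫ ω, (π (X ω) * ((if T ω then (1 : ℝ) else 0) * (if R ω ≤ θ then (1 : ℝ) else 0))
              - (π (X ω) * mstar θ (X ω)) * (if T ω then (1 : ℝ) else 0)) ∂P
          = (∫ ω, π (X ω) * ((if T ω then (1 : ℝ) else 0) * (if R ω ≤ θ then (1 : ℝ) else 0)) ∂P)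
            - ∫ ω, (π (X ω) * mstar θ (X ω)) * (if T ω then (1 : ℝ) else 0) ∂P :=
          integral_sub int3 int4
        rw [h1, h2, h3, h4]
    _ = ∫ ω, e (X ω) * (mstar θ (X ω) - (1 - α)) ∂P := by
        rw [I1, I3, I4, I5]
        simp only [sub_self, zero_sub, neg_sub]
        have : ∀ ω, π (X ω) * (e (X ω) * mstar θ (X ω)) = π (X ω) * mstar θ (X ω) * e (X ω) := by
          intro ω; ring
        rw [integral_congr_ae (ae_of_all _ this)]
        simp only [sub_self, zero_add]
        exact integral_congr_ae (ae_of_all _ fun ω => by ring)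
end

section
/- (Double robustness identity.) Under the covariate-shift model with R ⟂ T | X, let r_α satisfy P(R ≤ r_α | T=1) = 1−α. If either π ≡ π⋆ (the true odds-of-treatment function) or m ≡ m⋆ (the true conditional CDF), then E[IF(r_α, X, R, T; π, m)] = 0. -/
open MeasureTheory ProbabilityTheory

/-- Pull-out + condexp identification helper: if `f` is `𝔪`-measurable, `g` integrable,
`f*g` integrable, and `P[g|𝔪] =ᵐ h`, then `∫ f*g = ∫ f*h`. -/
lemma integral_mul_eq_of_condexp {Ω : Type*} [mΩ : MeasurableSpace Ω]
    (𝔪 : MeasurableSpace Ω) (hle : 𝔪 ≤ mΩ) (P : @Measure Ω mΩ) [IsProbabilityMeasure P]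
    (f g h : Ω → ℝ) (hf : StronglyMeasurable[𝔪] f) (hg : Integrable g P)
    (hfg : Integrable (f * g) P) (hce : P[g|𝔪] =ᵐ[P] h) :
    ∫ ω, f ω * g ω ∂P = ∫ ω, f ω * h ω ∂P := by
  haveI : SigmaFinite (P.trim hle) := inferInstance
  calc ∫ ω, f ω * g ω ∂P = ∫ ω, (P[f * g|𝔪]) ω ∂P := (integral_condExp hle).symm
    _ = ∫ ω, f ω * (P[g|𝔪]) ω ∂P :=
        integral_congr_ae (condExp_mul_of_stronglyMeasurable_left hf hfg hg)
    _ = ∫ ω, f ω * h ω ∂P :=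
        integral_congr_ae (hce.mono fun ω hω => by simp only [hω])

/-- Double robustness identity: if `P(R ≤ r_α | T = 1) = 1 − α` and either
`π ≡ π⋆` or `m ≡ m⋆`, then `E[IF(r_α, X, R, T; π, m)] = 0`. -/
theorem double_robustness_identity
    {Ω 𝒳 : Type*} [MeasurableSpace Ω] [MeasurableSpace 𝒳]
    (P : Measure Ω) [IsProbabilityMeasure P]
    (X : Ω → 𝒳) (T : Ω → Bool) (R : Ω → ℝ)
    (hX : Measurable X) (hT : Measurable T) (hR : Measurable R)
    (hT1 : 0 < P {ω | T ω = true})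
    (α : ℝ) (hα : α ∈ Set.Ioo (0 : ℝ) 1)
    (e : 𝒳 → ℝ) (mstar : ℝ → 𝒳 → ℝ)
    (hemeas : Measurable e) (hebd : ∀ x, e x ∈ Set.Icc (0 : ℝ) 1)
    (hmsmeas : ∀ θ, Measurable (mstar θ)) (hmsbd : ∀ θ x, mstar θ x ∈ Set.Icc (0 : ℝ) 1)
    -- `e(x)` is a version of `P(T = 1 | X = x)`
    (he : (fun ω => e (X ω)) =ᵐ[P]
      P[fun ω => (if T ω then (1 : ℝ) else 0) | MeasurableSpace.comap X inferInstance])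
    (hepos : ∀ᵐ ω ∂P, e (X ω) < 1)
    -- `mstar(θ,x)` is a version of `P(R ≤ θ | X = x)`
    (hms : ∀ θ : ℝ, (fun ω => mstar θ (X ω)) =ᵐ[P]
      P[fun ω => (if R ω ≤ θ then (1 : ℝ) else 0) | MeasurableSpace.comap X inferInstance])
    -- conditional independence of `R` and `T` given `X`
    (hCI : ∀ θ : ℝ,
      P[fun ω => (if T ω then (1 : ℝ) else 0) * (if R ω ≤ θ then (1 : ℝ) else 0)
        | MeasurableSpace.comap X inferInstance]
      =ᵐ[P] fun ω => e (X ω) * mstar θ (X ω))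
    -- candidate nuisance functions
    (π : 𝒳 → ℝ) (m : ℝ → 𝒳 → ℝ)
    (hπmeas : Measurable π) (hπint : Integrable (fun ω => π (X ω)) P)
    (hmmeas : ∀ θ, Measurable (m θ)) (hmbd : ∃ C, ∀ θ x, |m θ x| ≤ C)
    -- `r_α` is the `(1−α)`-quantile of `R` given `T = 1`
    (r : ℝ)
    (hrα : (P {ω | R ω ≤ r ∧ T ω = true}).toReal = (1 - α) * (P {ω | T ω = true}).toReal)
    -- double robustness: at least one nuisance is the truth
    (hDR : (π = fun x => e x / (1 - e x)) ∨ m = mstar) :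
    ∫ ω, IFfun α π m r (X ω) (R ω) (T ω) ∂P = 0 := by
  classical
  obtain ⟨C₀, hC₀⟩ := hmbd
  set C : ℝ := max C₀ 0 with hCdef
  have hC : ∀ θ x, |m θ x| ≤ C := fun θ x => le_trans (hC₀ θ x) (le_max_left _ _)
  have hC0 : 0 ≤ C := le_max_right _ _
  have hle : MeasurableSpace.comap X inferInstance ≤ ‹MeasurableSpace Ω› := hX.comap_le
  have hXm : Measurable[MeasurableSpace.comap X inferInstance] X :=
    Measurable.of_comap_le le_rfl
  -- indicator functions
  set iT : Ω → ℝ := fun ω => if T ω then (1 : ℝ) else 0 with hiTdef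
  set iR : Ω → ℝ := fun ω => if R ω ≤ r then (1 : ℝ) else 0 with hiRdef
  have hTset : MeasurableSet {ω | T ω = true} := hT (measurableSet_singleton true)
  have hiTmeas : Measurable iT := Measurable.ite hTset measurable_const measurable_const
  have hiRmeas : Measurable iR :=
    Measurable.ite (hR measurableSet_Iic) measurable_const measurable_const
  have hiTbd : ∀ ω, |iT ω| ≤ 1 := by
    intro ω; by_cases h : T ω <;> simp [hiTdef, h]
  have hiRbd : ∀ ω, |iR ω| ≤ 1 := by
    intro ω; by_cases h : R ω ≤ r <;> simp [hiRdef, h]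
  -- integrability of bounded measurable functions
  have hbint : ∀ (f : Ω → ℝ) (c : ℝ), Measurable f → (∀ ω, |f ω| ≤ c) → Integrable f P := by
    intro f c hf hb
    exact (integrable_const c).mono' hf.aestronglyMeasurable (Filter.Eventually.of_forall hb)
  have hiTint : Integrable iT P := hbint iT 1 hiTmeas hiTbd
  have hiRint : Integrable iR P := hbint iR 1 hiRmeas hiRbd
  have hiTiRint : Integrable (fun ω => iT ω * iR ω) P := by
    refine hbint _ 1 (hiTmeas.mul hiRmeas) fun ω => ?_
    calc |iT ω * iR ω| = |iT ω| * |iR ω| := abs_mul _ _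
      _ ≤ 1 * 1 := mul_le_mul (hiTbd ω) (hiRbd ω) (abs_nonneg _) zero_le_one
      _ = 1 := mul_one 1
  -- strongly measurable w.r.t. comap for functions of X
  have hsm : ∀ {g : 𝒳 → ℝ}, Measurable g →
      StronglyMeasurable[MeasurableSpace.comap X inferInstance] (fun ω => g (X ω)) := by
    intro g hg
    exact (hg.comp hXm).stronglyMeasurable
  -- ∫ iT = P(T = 1)
  have hDint : ∫ ω, iT ω ∂P = (P {ω | T ω = true}).toReal := by
    have h1 : ∀ ω, iT ω = Set.indicator {ω | T ω = true} (fun _ => (1:ℝ)) ω := by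
      intro ω
      by_cases h : T ω = true <;> simp [hiTdef, h, Set.indicator_apply]
    rw [integral_congr_ae (Filter.Eventually.of_forall h1)]
    exact integral_indicator_one hTset
  -- ∫ iT·iR = P(R ≤ r, T = 1)
  have hEmeas : MeasurableSet {ω | R ω ≤ r ∧ T ω = true} :=
    MeasurableSet.inter (hR measurableSet_Iic) hTset
  have hEind : ∫ ω, iT ω * iR ω ∂P = (P {ω | R ω ≤ r ∧ T ω = true}).toReal := by
    have h1 : ∀ ω, iT ω * iR ω
        = Set.indicator {ω | R ω ≤ r ∧ T ω = true} (fun _ => (1:ℝ)) ω := by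
      intro ω
      by_cases h : T ω = true <;> by_cases h2 : R ω ≤ r <;>
        simp [hiTdef, hiRdef, h, h2, Set.indicator_apply]
    rw [integral_congr_ae (Filter.Eventually.of_forall h1)]
    exact integral_indicator_one hEmeas
  -- ∫ iT·iR = ∫ e·mstar via conditional independence
  have hEce : ∫ ω, iT ω * iR ω ∂P = ∫ ω, e (X ω) * mstar r (X ω) ∂P := by
    haveI : SigmaFinite (P.trim hle) := inferInstance
    rw [← integral_condExp hle (f := fun ω => iT ω * iR ω)]
    exact integral_congr_ae (hCI r)
  -- the key identity: ∫ e·mstar = (1 − α)·P(T=1)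
  have hkey : ∫ ω, e (X ω) * mstar r (X ω) ∂P = (1 - α) * (P {ω | T ω = true}).toReal := by
    rw [← hEce, hEind, hrα]
  -- conditional expectation facts
  have hce1 : P[(fun ω => (1 - iT ω) * iR ω)|MeasurableSpace.comap X inferInstance]
      =ᵐ[P] fun ω => (1 - e (X ω)) * mstar r (X ω) := by
    have hfun : (fun ω => (1 - iT ω) * iR ω) = fun ω => iR ω - iT ω * iR ω := by
      funext ω; ring
    rw [hfun]
    have hsub := condExp_sub (μ := P) (m := MeasurableSpace.comap X inferInstance)
      hiRint hiTiRint
    refine hsub.trans ?_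
    filter_upwards [hms r, hCI r] with ω h1 h2
    simp only [Pi.sub_apply]
    rw [h2, ← h1]
    ring
  have hce2 : P[(fun ω => 1 - iT ω)|MeasurableSpace.comap X inferInstance]
      =ᵐ[P] fun ω => 1 - e (X ω) := by
    have hsub := condExp_sub (μ := P) (m := MeasurableSpace.comap X inferInstance)
      (integrable_const (1:ℝ)) hiTint
    refine hsub.trans ?_
    have hc : P[(fun _ : Ω => (1:ℝ))|MeasurableSpace.comap X inferInstance]
        = fun _ => (1:ℝ) := condExp_const hle 1
    filter_upwards [he] with ω h1
    simp only [Pi.sub_apply, hc]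
    rw [← h1]
  have hce3 : P[iT|MeasurableSpace.comap X inferInstance] =ᵐ[P] fun ω => e (X ω) := he.symm
  -- bound facts
  have h1iTbd : ∀ ω, |1 - iT ω| ≤ 1 := by
    intro ω; by_cases h : T ω <;> simp [hiTdef, h]
  have h1iTiRbd : ∀ ω, |(1 - iT ω) * iR ω| ≤ 1 := by
    intro ω
    calc |(1 - iT ω) * iR ω| = |1 - iT ω| * |iR ω| := abs_mul _ _
      _ ≤ 1 * 1 := mul_le_mul (h1iTbd ω) (hiRbd ω) (abs_nonneg _) zero_le_one
      _ = 1 := mul_one 1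
  have h1iTmeas : Measurable (fun ω => 1 - iT ω) := measurable_const.sub hiTmeas
  have h1iTiRmeas : Measurable (fun ω => (1 - iT ω) * iR ω) := h1iTmeas.mul hiRmeas
  -- integrability of the pieces
  have hint1 : Integrable (fun ω => π (X ω) * ((1 - iT ω) * iR ω)) P := by
    refine hπint.abs.mono' ((hπmeas.comp hX).mul h1iTiRmeas).aestronglyMeasurable ?_
    refine Filter.Eventually.of_forall fun ω => ?_
    simp only [Real.norm_eq_abs]
    rw [abs_mul]
    calc |π (X ω)| * |(1 - iT ω) * iR ω| ≤ |π (X ω)| * 1 :=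
          mul_le_mul_of_nonneg_left (h1iTiRbd ω) (abs_nonneg _)
      _ = |π (X ω)| := mul_one _
  have hint2 : Integrable (fun ω => (π (X ω) * m r (X ω)) * (1 - iT ω)) P := by
    refine (hπint.abs.const_mul C).mono'
      (((hπmeas.comp hX).mul ((hmmeas r).comp hX)).mul h1iTmeas).aestronglyMeasurable ?_
    refine Filter.Eventually.of_forall fun ω => ?_
    simp only [Real.norm_eq_abs]
    rw [abs_mul, abs_mul]
    calc |π (X ω)| * |m r (X ω)| * |1 - iT ω|
        ≤ |π (X ω)| * C * 1 := by
          refine mul_le_mul (mul_le_mul_of_nonneg_left (hC r (X ω)) (abs_nonneg _))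
            (h1iTbd ω) (abs_nonneg _) (by positivity)
      _ = C * |π (X ω)| := by ring
  have hint3 : Integrable (fun ω => m r (X ω) * iT ω) P := by
    refine hbint _ C (((hmmeas r).comp hX).mul hiTmeas) fun ω => ?_
    calc |m r (X ω) * iT ω| = |m r (X ω)| * |iT ω| := abs_mul _ _
      _ ≤ C * 1 := mul_le_mul (hC r (X ω)) (hiTbd ω) (abs_nonneg _) hC0
      _ = C := mul_one C
  have hint4 : Integrable (fun ω => (1 - α) * iT ω) P := hiTint.const_mul _
  -- term A
  have hA : ∫ ω, π (X ω) * ((1 - iT ω) * iR ω) ∂P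
      = ∫ ω, π (X ω) * ((1 - e (X ω)) * mstar r (X ω)) ∂P :=
    integral_mul_eq_of_condexp _ hle P _ _ _ (hsm hπmeas)
      (hbint _ 1 h1iTiRmeas h1iTiRbd) hint1 hce1
  -- term B
  have hB : ∫ ω, (π (X ω) * m r (X ω)) * (1 - iT ω) ∂P
      = ∫ ω, (π (X ω) * m r (X ω)) * (1 - e (X ω)) ∂P :=
    integral_mul_eq_of_condexp _ hle P _ _ _ (hsm (hπmeas.mul (hmmeas r)))
      (hbint _ 1 h1iTmeas h1iTbd) hint2 hce2
  -- term C
  have hCterm : ∫ ω, m r (X ω) * iT ω ∂P = ∫ ω, m r (X ω) * e (X ω) ∂P :=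
    integral_mul_eq_of_condexp _ hle P _ _ _ (hsm (hmmeas r)) hiTint hint3 hce3
  -- decompose the integrand
  have hIF : ∀ ω, IFfun α π m r (X ω) (R ω) (T ω)
      = π (X ω) * ((1 - iT ω) * iR ω) - (π (X ω) * m r (X ω)) * (1 - iT ω)
        + (m r (X ω) * iT ω - (1 - α) * iT ω) := by
    intro ω
    by_cases h : T ω = true <;> by_cases h2 : R ω ≤ r <;>
      simp [IFfun, hiTdef, hiRdef, h, h2] <;> ring
  -- split the integral
  have hsplit : ∫ ω, IFfun α π m r (X ω) (R ω) (T ω) ∂P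
      = ∫ ω, π (X ω) * ((1 - iT ω) * iR ω) ∂P
        - ∫ ω, (π (X ω) * m r (X ω)) * (1 - iT ω) ∂P
        + (∫ ω, m r (X ω) * iT ω ∂P - ∫ ω, (1 - α) * iT ω ∂P) := by
    rw [integral_congr_ae (Filter.Eventually.of_forall hIF)]
    have h12 : Integrable (fun ω => π (X ω) * ((1 - iT ω) * iR ω)
        - (π (X ω) * m r (X ω)) * (1 - iT ω)) P := hint1.sub hint2
    have h34 : Integrable (fun ω => m r (X ω) * iT ω - (1 - α) * iT ω) P :=
      hint3.sub hint4
    calc ∫ ω, (π (X ω) * ((1 - iT ω) * iR ω) - (π (X ω) * m r (X ω)) * (1 - iT ω)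
          + (m r (X ω) * iT ω - (1 - α) * iT ω)) ∂P
        = (∫ ω, (π (X ω) * ((1 - iT ω) * iR ω)
            - (π (X ω) * m r (X ω)) * (1 - iT ω)) ∂P)
          + ∫ ω, (m r (X ω) * iT ω - (1 - α) * iT ω) ∂P := integral_add h12 h34
      _ = ∫ ω, π (X ω) * ((1 - iT ω) * iR ω) ∂P
            - ∫ ω, (π (X ω) * m r (X ω)) * (1 - iT ω) ∂P
            + (∫ ω, m r (X ω) * iT ω ∂P - ∫ ω, (1 - α) * iT ω ∂P) := by
          rw [integral_sub hint1 hint2, integral_sub hint3 hint4]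
  have hDval : ∫ ω, (1 - α) * iT ω ∂P = (1 - α) * (P {ω | T ω = true}).toReal := by
    rw [integral_const_mul, hDint]
  rw [hsplit, hA, hB, hCterm, hDval]
  -- now case on double robustness
  rcases hDR with hπe | hmms
  · -- π = e/(1−e)
    have hA' : ∫ ω, π (X ω) * ((1 - e (X ω)) * mstar r (X ω)) ∂P
        = ∫ ω, e (X ω) * mstar r (X ω) ∂P := by
      refine integral_congr_ae ?_
      filter_upwards [hepos] with ω hω
      have hne : 1 - e (X ω) ≠ 0 := by linarith
      rw [hπe]
      field_simp <;> ring
    have hB' : ∫ ω, (π (X ω) * m r (X ω)) * (1 - e (X ω)) ∂P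
        = ∫ ω, e (X ω) * m r (X ω) ∂P := by
      refine integral_congr_ae ?_
      filter_upwards [hepos] with ω hω
      have hne : 1 - e (X ω) ≠ 0 := by linarith
      rw [hπe]
      field_simp <;> ring
    have hC' : ∫ ω, m r (X ω) * e (X ω) ∂P = ∫ ω, e (X ω) * m r (X ω) ∂P :=
      integral_congr_ae (Filter.Eventually.of_forall fun ω => mul_comm _ _)
    rw [hA', hB', hC', hkey]
    ring
  · -- m = mstar
    subst hmms
    have hAB : ∫ ω, π (X ω) * ((1 - e (X ω)) * m r (X ω)) ∂P
        = ∫ ω, (π (X ω) * m r (X ω)) * (1 - e (X ω)) ∂P :=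
      integral_congr_ae (Filter.Eventually.of_forall fun ω => by ring)
    have hC' : ∫ ω, m r (X ω) * e (X ω) ∂P = ∫ ω, e (X ω) * m r (X ω) ∂P :=
      integral_congr_ae (Filter.Eventually.of_forall fun ω => mul_comm _ _)
    rw [hAB, hC', hkey]
    ring
end

section
/- (Product bias bound.) For any measurable functions π̂, π⋆ : 𝒳 → ℝ and m̂, m⋆ : ℝ × 𝒳 → ℝ, where m⋆(θ,x) = P(R ≤ θ | X=x) and π⋆(x) = P(T=1|X=x)/P(T=0|X=x), the difference of population influence-function expectations satisfies sup_{γ∈ℝ} | E[IF(γ,X,R,T;π̂,m̂)] − E[IF(γ,X,R,T;π⋆,m⋆)] | ≤ ‖π̂ − π⋆‖₂ · sup_γ ‖m̂(γ,·) − m⋆(γ,·)‖₂, where ‖f‖₂ = (E f(X)²)^{1/2}. -/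
open MeasureTheory ProbabilityTheory

lemma aux_mul_condexp {Ω 𝒳 : Type*} [MeasurableSpace Ω] [MeasurableSpace 𝒳]
    (P : Measure Ω) [IsProbabilityMeasure P] {X : Ω → 𝒳} (hX : Measurable X)
    {a f : 𝒳 → ℝ} {h : Ω → ℝ} (ha : Measurable a)
    (haint : Integrable (fun ω => a (X ω)) P)
    (hh : Measurable h) {c : ℝ} (hc : ∀ ω, |h ω| ≤ c)
    (hf : (fun ω => f (X ω)) =ᵐ[P] P[h | MeasurableSpace.comap X inferInstance]) :
    ∫ ω, a (X ω) * h ω ∂P = ∫ ω, a (X ω) * f (X ω) ∂P := by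
  have hmX : MeasurableSpace.comap X inferInstance ≤ _ := hX.comap_le
  have hhint : Integrable h P :=
    ⟨hh.aestronglyMeasurable, HasFiniteIntegral.of_bounded (C := c)
      (ae_of_all _ fun ω => by simpa [Real.norm_eq_abs] using hc ω)⟩
  have hprod : Integrable (fun ω => a (X ω) * h ω) P := by
    have := haint.bdd_mul hh.aestronglyMeasurable
      (ae_of_all _ fun ω => by simpa [Real.norm_eq_abs] using hc ω)
    simpa [mul_comm] using this
  have hsm : StronglyMeasurable[MeasurableSpace.comap X inferInstance] (fun ω => a (X ω)) :=
    (ha.comp (measurable_iff_comap_le.mpr le_rfl)).stronglyMeasurable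
  calc ∫ ω, a (X ω) * h ω ∂P
      = ∫ ω, (P[fun ω => a (X ω) * h ω | MeasurableSpace.comap X inferInstance]) ω ∂P :=
        (integral_condExp hmX).symm
    _ = ∫ ω, a (X ω) * f (X ω) ∂P := by
        refine integral_congr_ae ?_
        have h1 := condExp_mul_of_stronglyMeasurable_left (μ := P) hsm hprod hhint
        filter_upwards [h1, hf] with ω hω1 hω2
        exact hω1.trans (by simp only [Pi.mul_apply]; rw [← hω2])

lemma integral_split6 {Ω : Type*} [MeasurableSpace Ω] {P : MeasureTheory.Measure Ω}
    {A B C D E F : Ω → ℝ} (hA : Integrable A P) (hB : Integrable B P) (hC : Integrable C P)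
    (hD : Integrable D P) (hE : Integrable E P) (hF : Integrable F P) :
    ∫ ω, (A ω - B ω - C ω + D ω + E ω - F ω) ∂P
      = ∫ ω, A ω ∂P - ∫ ω, B ω ∂P - ∫ ω, C ω ∂P + ∫ ω, D ω ∂P + ∫ ω, E ω ∂P - ∫ ω, F ω ∂P := by
  have h1 : Integrable (fun ω => A ω - B ω) P := hA.sub hB
  have h2 : Integrable (fun ω => A ω - B ω - C ω) P := h1.sub hC
  have h3 : Integrable (fun ω => A ω - B ω - C ω + D ω) P := h2.add hD
  have h4 : Integrable (fun ω => A ω - B ω - C ω + D ω + E ω) P := h3.add hE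
  have t5 : ∫ ω, (A ω - B ω - C ω + D ω + E ω - F ω) ∂P
      = ∫ ω, (A ω - B ω - C ω + D ω + E ω) ∂P - ∫ ω, F ω ∂P := integral_sub h4 hF
  have t4 : ∫ ω, (A ω - B ω - C ω + D ω + E ω) ∂P
      = ∫ ω, (A ω - B ω - C ω + D ω) ∂P + ∫ ω, E ω ∂P := integral_add h3 hE
  have t3 : ∫ ω, (A ω - B ω - C ω + D ω) ∂P
      = ∫ ω, (A ω - B ω - C ω) ∂P + ∫ ω, D ω ∂P := integral_add h2 hD
  have t2 : ∫ ω, (A ω - B ω - C ω) ∂P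
      = ∫ ω, (A ω - B ω) ∂P - ∫ ω, C ω ∂P := integral_sub h1 hC
  have t1 : ∫ ω, (A ω - B ω) ∂P = ∫ ω, A ω ∂P - ∫ ω, B ω ∂P := integral_sub hA hB
  rw [t5, t4, t3, t2, t1]

/-- Product bias bound: for every `γ`,
`|E[IF(γ;π̂,m̂)] − E[IF(γ;π⋆,m⋆)]| ≤ ‖π̂ − π⋆‖₂ · sup_γ ‖m̂(γ,·) − m⋆(γ,·)‖₂`,
where `‖f‖₂ = (E f(X)²)^{1/2}`. -/
theorem product_bias_bound
    {Ω 𝒳 : Type*} [MeasurableSpace Ω] [MeasurableSpace 𝒳]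
    (P : Measure Ω) [IsProbabilityMeasure P]
    (X : Ω → 𝒳) (T : Ω → Bool) (R : Ω → ℝ)
    (hX : Measurable X) (hT : Measurable T) (hR : Measurable R)
    (α : ℝ) (hα : α ∈ Set.Ioo (0 : ℝ) 1)
    (e : 𝒳 → ℝ) (mstar : ℝ → 𝒳 → ℝ)
    (hemeas : Measurable e) (hebd : ∀ x, e x ∈ Set.Icc (0 : ℝ) 1)
    (hmsmeas : ∀ θ, Measurable (mstar θ)) (hmsbd : ∀ θ x, mstar θ x ∈ Set.Icc (0 : ℝ) 1)
    -- `e(x)` is a version of `P(T = 1 | X = x)`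
    (he : (fun ω => e (X ω)) =ᵐ[P]
      P[fun ω => (if T ω then (1 : ℝ) else 0) | MeasurableSpace.comap X inferInstance])
    (hepos : ∀ᵐ ω ∂P, e (X ω) < 1)
    -- `mstar(θ,x)` is a version of `P(R ≤ θ | X = x)`
    (hms : ∀ θ : ℝ, (fun ω => mstar θ (X ω)) =ᵐ[P]
      P[fun ω => (if R ω ≤ θ then (1 : ℝ) else 0) | MeasurableSpace.comap X inferInstance])
    -- conditional independence of `R` and `T` given `X`
    (hCI : ∀ θ : ℝ,
      P[fun ω => (if T ω then (1 : ℝ) else 0) * (if R ω ≤ θ then (1 : ℝ) else 0)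
        | MeasurableSpace.comap X inferInstance]
      =ᵐ[P] fun ω => e (X ω) * mstar θ (X ω))
    -- `π⋆(X) = e(X)/(1−e(X))` has finite second moment
    (hπstar2 : Integrable (fun ω => (e (X ω) / (1 - e (X ω))) ^ 2) P)
    -- estimated nuisances: deterministic, measurable, with finite second moment / bounded
    (πhat : 𝒳 → ℝ) (mhat : ℝ → 𝒳 → ℝ)
    (hπhmeas : Measurable πhat) (hπh2 : Integrable (fun ω => (πhat (X ω)) ^ 2) P)
    (hmhmeas : ∀ γ, Measurable (mhat γ)) (hmhbd : ∃ C, ∀ γ x, |mhat γ x| ≤ C)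
    (γ : ℝ) :
    |(∫ ω, IFfun α πhat mhat γ (X ω) (R ω) (T ω) ∂P)
        - ∫ ω, IFfun α (fun x => e x / (1 - e x)) mstar γ (X ω) (R ω) (T ω) ∂P|
      ≤ Real.sqrt (∫ ω, (πhat (X ω) - e (X ω) / (1 - e (X ω))) ^ 2 ∂P) *
          ⨆ γ' : ℝ, Real.sqrt (∫ ω, (mhat γ' (X ω) - mstar γ' (X ω)) ^ 2 ∂P) := by
  obtain ⟨C, hC⟩ := hmhbd
  set C' : ℝ := max C 0 with hC'def
  have hC' : ∀ γ' x, |mhat γ' x| ≤ C' := fun γ' x => (hC γ' x).trans (le_max_left _ _)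
  have hC'0 : 0 ≤ C' := le_max_right _ _
  set πs : 𝒳 → ℝ := fun x => e x / (1 - e x) with hπsdef
  have hπsmeas : Measurable πs := hemeas.div (measurable_const.sub hemeas)
  -- measurability of indicators
  have hτ : Measurable (fun ω => if T ω then (1 : ℝ) else 0) := by
    exact Measurable.ite (hT (MeasurableSet.singleton true)) measurable_const measurable_const
  have hρ : Measurable (fun ω => if R ω ≤ γ then (1 : ℝ) else 0) := by
    exact Measurable.ite (hR measurableSet_Iic) measurable_const measurable_const
  have hτbd : ∀ ω, |(if T ω then (1 : ℝ) else 0)| ≤ 1 := by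
    intro ω; split_ifs <;> norm_num
  have hρbd : ∀ ω, |(if R ω ≤ γ then (1 : ℝ) else 0)| ≤ 1 := by
    intro ω; split_ifs <;> norm_num
  -- L² and L¹ facts for πhat, πs
  have hπhL2 : MemLp (fun ω => πhat (X ω)) 2 P :=
    (memLp_two_iff_integrable_sq ((hπhmeas.comp hX).aestronglyMeasurable)).2 hπh2
  have hπsL2 : MemLp (fun ω => πs (X ω)) 2 P :=
    (memLp_two_iff_integrable_sq ((hπsmeas.comp hX).aestronglyMeasurable)).2 hπstar2
  have hπhI : Integrable (fun ω => πhat (X ω)) P := hπhL2.integrable one_le_two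
  have hπsI : Integrable (fun ω => πs (X ω)) P := hπsL2.integrable one_le_two
  -- bounded-multiplication helper
  have hbmul : ∀ {g h : Ω → ℝ} {c : ℝ}, Integrable g P → Measurable h → (∀ ω, |h ω| ≤ c) →
      Integrable (fun ω => g ω * h ω) P := by
    intro g h c hg hh hc
    simpa [mul_comm] using hg.bdd_mul hh.aestronglyMeasurable
      (ae_of_all _ fun ω => by simpa [Real.norm_eq_abs] using hc ω)
  have hbInt : ∀ {h : Ω → ℝ} {c : ℝ}, Measurable h → (∀ ω, |h ω| ≤ c) → Integrable h P := by
    intro h c hh hc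
    exact ⟨hh.aestronglyMeasurable, HasFiniteIntegral.of_bounded (C := c)
      (ae_of_all _ fun ω => by simpa [Real.norm_eq_abs] using hc ω)⟩
  -- the expansion of the influence-function expectation
  have expand : ∀ (π : 𝒳 → ℝ) (M : ℝ → 𝒳 → ℝ) (c : ℝ), Measurable π →
      Integrable (fun ω => π (X ω)) P → Measurable (M γ) → (∀ x, |M γ x| ≤ c) →
      ∫ ω, IFfun α π M γ (X ω) (R ω) (T ω) ∂P
        = ∫ ω, π (X ω) * mstar γ (X ω) ∂P - ∫ ω, π (X ω) * M γ (X ω) ∂P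
          - ∫ ω, π (X ω) * (e (X ω) * mstar γ (X ω)) ∂P
          + ∫ ω, π (X ω) * M γ (X ω) * e (X ω) ∂P
          + ∫ ω, M γ (X ω) * e (X ω) ∂P
          - ∫ ω, (1 - α) * e (X ω) ∂P := by
    intro π M c hπm hπI hMm hMbd
    have hMI : Integrable (fun ω => M γ (X ω)) P := hbInt (hMm.comp hX) (fun ω => hMbd _)
    have i1 : Integrable (fun ω => π (X ω) * (if R ω ≤ γ then (1 : ℝ) else 0)) P :=
      hbmul hπI hρ hρbd
    have i2 : Integrable (fun ω => π (X ω) * M γ (X ω)) P :=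
      hbmul hπI (hMm.comp hX) (fun ω => hMbd _)
    have i3 : Integrable (fun ω => π (X ω) *
        ((if T ω then (1 : ℝ) else 0) * (if R ω ≤ γ then (1 : ℝ) else 0))) P :=
      hbmul hπI (hτ.mul hρ) (fun ω => by
        rw [abs_mul]
        exact mul_le_one₀ (hτbd ω) (abs_nonneg _) (hρbd ω))
    have i4 : Integrable (fun ω => π (X ω) * M γ (X ω) * (if T ω then (1 : ℝ) else 0)) P :=
      hbmul i2 hτ hτbd
    have i5 : Integrable (fun ω => M γ (X ω) * (if T ω then (1 : ℝ) else 0)) P :=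
      hbmul hMI hτ hτbd
    have i6 : Integrable (fun ω => (1 - α) * (if T ω then (1 : ℝ) else 0)) P :=
      hbmul (integrable_const _) hτ hτbd
    have hIF : (fun ω => IFfun α π M γ (X ω) (R ω) (T ω)) = fun ω =>
        π (X ω) * (if R ω ≤ γ then (1 : ℝ) else 0)
        - π (X ω) * M γ (X ω)
        - π (X ω) * ((if T ω then (1 : ℝ) else 0) * (if R ω ≤ γ then (1 : ℝ) else 0))
        + π (X ω) * M γ (X ω) * (if T ω then (1 : ℝ) else 0)
        + M γ (X ω) * (if T ω then (1 : ℝ) else 0)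
        - (1 - α) * (if T ω then (1 : ℝ) else 0) := by
      funext ω
      cases hTω : T ω <;> simp only [IFfun, hTω, Bool.false_eq_true, if_true, if_false] <;> ring
    rw [hIF]
    rw [integral_split6 i1 i2 i3 i4 i5 i6]
    have e1 : ∫ ω, π (X ω) * (if R ω ≤ γ then (1 : ℝ) else 0) ∂P
        = ∫ ω, π (X ω) * mstar γ (X ω) ∂P :=
      aux_mul_condexp P hX hπm hπI hρ hρbd (hms γ)
    have e3 : ∫ ω, π (X ω) * ((if T ω then (1 : ℝ) else 0) * (if R ω ≤ γ then (1 : ℝ) else 0)) ∂P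
        = ∫ ω, π (X ω) * (e (X ω) * mstar γ (X ω)) ∂P :=
      aux_mul_condexp (f := fun x => e x * mstar γ x) P hX hπm hπI (hτ.mul hρ)
        (fun ω => by
          rw [abs_mul]
          exact mul_le_one₀ (hτbd ω) (abs_nonneg _) (hρbd ω)) (hCI γ).symm
    have e4 : ∫ ω, π (X ω) * M γ (X ω) * (if T ω then (1 : ℝ) else 0) ∂P
        = ∫ ω, π (X ω) * M γ (X ω) * e (X ω) ∂P :=
      aux_mul_condexp P hX (hπm.mul hMm) i2 hτ hτbd he
    have e5 : ∫ ω, M γ (X ω) * (if T ω then (1 : ℝ) else 0) ∂P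
        = ∫ ω, M γ (X ω) * e (X ω) ∂P :=
      aux_mul_condexp P hX hMm hMI hτ hτbd he
    have e6 : ∫ ω, (1 - α) * (if T ω then (1 : ℝ) else 0) ∂P
        = ∫ ω, (1 - α) * e (X ω) ∂P :=
      aux_mul_condexp P hX (measurable_const : Measurable (fun _ : 𝒳 => (1 - α)))
        (integrable_const _) hτ hτbd he
    rw [e1, e3, e4, e5, e6]
  -- integrability of the pieces of J
  have hmsγbd : ∀ x, |mstar γ x| ≤ 1 := fun x =>
    abs_le.2 ⟨by linarith [(hmsbd γ x).1], (hmsbd γ x).2⟩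
  have hebd' : ∀ x, |e x| ≤ 1 := fun x => abs_le.2 ⟨by linarith [(hebd x).1], (hebd x).2⟩
  have j1 : Integrable (fun ω => πhat (X ω) * mstar γ (X ω)) P :=
    hbmul hπhI ((hmsmeas γ).comp hX) (fun ω => hmsγbd _)
  have j2 : Integrable (fun ω => πhat (X ω) * mhat γ (X ω)) P :=
    hbmul hπhI ((hmhmeas γ).comp hX) (fun ω => hC' γ _)
  have j3 : Integrable (fun ω => πhat (X ω) * (e (X ω) * mstar γ (X ω))) P :=
    hbmul hπhI ((hemeas.mul (hmsmeas γ)).comp hX) (fun ω => by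
      rw [abs_mul]
      exact mul_le_one₀ (hebd' _) (abs_nonneg _) (hmsγbd _))
  have j4 : Integrable (fun ω => πhat (X ω) * mhat γ (X ω) * e (X ω)) P :=
    hbmul j2 (hemeas.comp hX) (fun ω => hebd' _)
  have j5 : Integrable (fun ω => mhat γ (X ω) * e (X ω)) P :=
    hbInt (((hmhmeas γ).mul hemeas).comp hX) (c := C' * 1) (fun ω => by
      rw [abs_mul]
      exact mul_le_mul (hC' γ _) (hebd' _) (abs_nonneg _) hC'0)
  have j6 : Integrable (fun ω => mstar γ (X ω) * e (X ω)) P :=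
    hbInt (((hmsmeas γ).mul hemeas).comp hX) (c := 1 * 1) (fun ω => by
      rw [abs_mul]
      exact mul_le_mul (hmsγbd _) (hebd' _) (abs_nonneg _) zero_le_one)
  -- key identity: the difference is ∫ (πhat - πs) * ((1 - e) * (mstar - mhat))
  have key : (∫ ω, IFfun α πhat mhat γ (X ω) (R ω) (T ω) ∂P)
        - ∫ ω, IFfun α πs mstar γ (X ω) (R ω) (T ω) ∂P
      = ∫ ω, (πhat (X ω) - πs (X ω)) * ((1 - e (X ω)) * (mstar γ (X ω) - mhat γ (X ω))) ∂P := by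
    rw [expand πhat mhat C' hπhmeas hπhI (hmhmeas γ) (fun x => hC' γ x),
        expand πs mstar 1 hπsmeas hπsI (hmsmeas γ) (fun x => hmsγbd x)]
    have hcancel : ∫ ω, πs (X ω) * (e (X ω) * mstar γ (X ω)) ∂P
        = ∫ ω, πs (X ω) * mstar γ (X ω) * e (X ω) ∂P :=
      integral_congr_ae (ae_of_all _ fun ω => by ring)
    have hJD : ∫ ω, (πhat (X ω) * mstar γ (X ω) - πhat (X ω) * mhat γ (X ω)
          - πhat (X ω) * (e (X ω) * mstar γ (X ω)) + πhat (X ω) * mhat γ (X ω) * e (X ω)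
          + mhat γ (X ω) * e (X ω) - mstar γ (X ω) * e (X ω)) ∂P
        = ∫ ω, (πhat (X ω) - πs (X ω)) * ((1 - e (X ω)) * (mstar γ (X ω) - mhat γ (X ω))) ∂P := by
      refine integral_congr_ae ?_
      filter_upwards [hepos] with ω hω
      have hne : 1 - e (X ω) ≠ 0 := ne_of_gt (sub_pos.mpr hω)
      rw [hπsdef]
      field_simp
      ring
    have hsplit : ∫ ω, (πhat (X ω) * mstar γ (X ω) - πhat (X ω) * mhat γ (X ω)
          - πhat (X ω) * (e (X ω) * mstar γ (X ω)) + πhat (X ω) * mhat γ (X ω) * e (X ω)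
          + mhat γ (X ω) * e (X ω) - mstar γ (X ω) * e (X ω)) ∂P
        = ∫ ω, πhat (X ω) * mstar γ (X ω) ∂P - ∫ ω, πhat (X ω) * mhat γ (X ω) ∂P
          - ∫ ω, πhat (X ω) * (e (X ω) * mstar γ (X ω)) ∂P
          + ∫ ω, πhat (X ω) * mhat γ (X ω) * e (X ω) ∂P
          + ∫ ω, mhat γ (X ω) * e (X ω) ∂P - ∫ ω, mstar γ (X ω) * e (X ω) ∂P := by
      exact integral_split6 j1 j2 j3 j4 j5 j6
    rw [hcancel, ← hJD, hsplit]
    ring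
  rw [key]
  -- bound |∫ D| by the integral of the product of absolute values
  have hDI : Integrable (fun ω =>
      (πhat (X ω) - πs (X ω)) * ((1 - e (X ω)) * (mstar γ (X ω) - mhat γ (X ω)))) P :=
    hbmul (hπhI.sub hπsI)
      (((measurable_const.sub hemeas).mul ((hmsmeas γ).sub (hmhmeas γ))).comp hX)
      (c := 1 * (1 + C')) (fun ω => by
        rw [abs_mul]
        refine mul_le_mul ?_ ?_ (abs_nonneg _) zero_le_one
        · exact abs_le.2 ⟨by linarith [(hebd (X ω)).2], by linarith [(hebd (X ω)).1]⟩
        · exact (abs_sub _ _).trans (by gcongr; exacts [hmsγbd _, hC' γ _]))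
  have hprodI : Integrable (fun ω =>
      |πhat (X ω) - πs (X ω)| * |mhat γ (X ω) - mstar γ (X ω)|) P :=
    hbmul (hπhI.sub hπsI).abs ((((hmhmeas γ).sub (hmsmeas γ)).comp hX).abs)
      (c := C' + 1) (fun ω => by
        rw [abs_abs]
        exact (abs_sub _ _).trans (by gcongr; exacts [hC' γ _, hmsγbd _]))
  have habs : |∫ ω, (πhat (X ω) - πs (X ω)) *
        ((1 - e (X ω)) * (mstar γ (X ω) - mhat γ (X ω))) ∂P|
      ≤ ∫ ω, |πhat (X ω) - πs (X ω)| * |mhat γ (X ω) - mstar γ (X ω)| ∂P := by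
    have hnorm := norm_integral_le_integral_norm (μ := P)
      (f := fun ω => (πhat (X ω) - πs (X ω)) * ((1 - e (X ω)) * (mstar γ (X ω) - mhat γ (X ω))))
    simp only [Real.norm_eq_abs] at hnorm
    refine hnorm.trans ?_
    refine integral_mono hDI.abs hprodI (fun ω => ?_)
    rw [abs_mul, abs_mul]
    have h1 : |1 - e (X ω)| ≤ 1 := by
      exact abs_le.2 ⟨by linarith [(hebd (X ω)).2], by linarith [(hebd (X ω)).1]⟩
    have h2 : |mstar γ (X ω) - mhat γ (X ω)| = |mhat γ (X ω) - mstar γ (X ω)| := abs_sub_comm _ _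
    calc |πhat (X ω) - πs (X ω)| * (|1 - e (X ω)| * |mstar γ (X ω) - mhat γ (X ω)|)
        ≤ |πhat (X ω) - πs (X ω)| * (1 * |mstar γ (X ω) - mhat γ (X ω)|) := by
          gcongr
      _ = |πhat (X ω) - πs (X ω)| * |mhat γ (X ω) - mstar γ (X ω)| := by rw [one_mul, h2]
  -- Cauchy-Schwarz
  have hmdiffL2 : MemLp (fun ω => mhat γ (X ω) - mstar γ (X ω)) 2 P :=
    (memLp_two_iff_integrable_sq
      ((((hmhmeas γ).sub (hmsmeas γ)).comp hX).aestronglyMeasurable)).2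
      (hbInt ((((hmhmeas γ).sub (hmsmeas γ)).comp hX).pow measurable_const)
        (c := (C' + 1) ^ 2) (fun ω => by
          rw [abs_pow]
          gcongr
          exact (abs_sub _ _).trans (by gcongr; exacts [hC' γ _, hmsγbd _])))
  have hCS : ∫ ω, |πhat (X ω) - πs (X ω)| * |mhat γ (X ω) - mstar γ (X ω)| ∂P
      ≤ Real.sqrt (∫ ω, (πhat (X ω) - πs (X ω)) ^ 2 ∂P) *
        Real.sqrt (∫ ω, (mhat γ (X ω) - mstar γ (X ω)) ^ 2 ∂P) := by
    have h2 : (2 : ℝ).HolderConjugate 2 := ⟨by norm_num, by norm_num, by norm_num⟩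
    have hof : ENNReal.ofReal (2 : ℝ) = 2 := by
      rw [ENNReal.ofReal_ofNat]
    have hf : MemLp (fun ω => |πhat (X ω) - πs (X ω)|) (ENNReal.ofReal 2) P := by
      rw [hof]
      simpa [Real.norm_eq_abs] using (hπhL2.sub hπsL2).norm
    have hg : MemLp (fun ω => |mhat γ (X ω) - mstar γ (X ω)|) (ENNReal.ofReal 2) P := by
      rw [hof]
      simpa [Real.norm_eq_abs] using hmdiffL2.norm
    have := integral_mul_le_Lp_mul_Lq_of_nonneg h2
      (ae_of_all _ fun ω => abs_nonneg (πhat (X ω) - πs (X ω)))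
      (ae_of_all _ fun ω => abs_nonneg (mhat γ (X ω) - mstar γ (X ω))) hf hg
    simp only [Real.rpow_two, sq_abs] at this
    rw [Real.sqrt_eq_rpow, Real.sqrt_eq_rpow]
    convert this using 3 <;> rw [← Real.rpow_two, Real.rpow_natCast] <;> norm_num
  -- bound the sqrt term by the supremum
  have hsup : Real.sqrt (∫ ω, (mhat γ (X ω) - mstar γ (X ω)) ^ 2 ∂P)
      ≤ ⨆ γ' : ℝ, Real.sqrt (∫ ω, (mhat γ' (X ω) - mstar γ' (X ω)) ^ 2 ∂P) := by
    refine le_ciSup (f := fun γ' => Real.sqrt (∫ ω, (mhat γ' (X ω) - mstar γ' (X ω)) ^ 2 ∂P)) ?_ γ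
    refine ⟨C' + 1, ?_⟩
    rintro _ ⟨γ', rfl⟩
    have hb : ∀ ω, (mhat γ' (X ω) - mstar γ' (X ω)) ^ 2 ≤ (C' + 1) ^ 2 := fun ω => by
      have hbd2 : |mstar γ' (X ω)| ≤ 1 :=
        abs_le.2 ⟨by linarith [(hmsbd γ' (X ω)).1], (hmsbd γ' (X ω)).2⟩
      have habs2 : |mhat γ' (X ω) - mstar γ' (X ω)| ≤ C' + 1 :=
        (abs_sub _ _).trans (add_le_add (hC' γ' _) hbd2)
      rw [← sq_abs]
      exact pow_le_pow_left₀ (abs_nonneg _) habs2 2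
    have hint : Integrable (fun ω => (mhat γ' (X ω) - mstar γ' (X ω)) ^ 2) P :=
      hbInt ((((hmhmeas γ').sub (hmsmeas γ')).comp hX).pow measurable_const)
        (c := (C' + 1) ^ 2) (fun ω => by rw [abs_pow, sq_abs]; exact hb ω)
    have : ∫ ω, (mhat γ' (X ω) - mstar γ' (X ω)) ^ 2 ∂P ≤ (C' + 1) ^ 2 := by
      calc ∫ ω, (mhat γ' (X ω) - mstar γ' (X ω)) ^ 2 ∂P
          ≤ ∫ _, (C' + 1) ^ 2 ∂P := integral_mono hint (integrable_const _) hb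
        _ = (C' + 1) ^ 2 := by simp
    calc Real.sqrt (∫ ω, (mhat γ' (X ω) - mstar γ' (X ω)) ^ 2 ∂P)
        ≤ Real.sqrt ((C' + 1) ^ 2) := Real.sqrt_le_sqrt this
      _ = C' + 1 := Real.sqrt_sq (by linarith)
  calc |∫ ω, (πhat (X ω) - πs (X ω)) *
        ((1 - e (X ω)) * (mstar γ (X ω) - mhat γ (X ω))) ∂P|
      ≤ ∫ ω, |πhat (X ω) - πs (X ω)| * |mhat γ (X ω) - mstar γ (X ω)| ∂P := habs
    _ ≤ Real.sqrt (∫ ω, (πhat (X ω) - πs (X ω)) ^ 2 ∂P) *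
        Real.sqrt (∫ ω, (mhat γ (X ω) - mstar γ (X ω)) ^ 2 ∂P) := hCS
    _ ≤ Real.sqrt (∫ ω, (πhat (X ω) - πs (X ω)) ^ 2 ∂P) *
        ⨆ γ' : ℝ, Real.sqrt (∫ ω, (mhat γ' (X ω) - mstar γ' (X ω)) ^ 2 ∂P) :=
        mul_le_mul_of_nonneg_left hsup (Real.sqrt_nonneg _)
end

section
/- (Key algebraic identity behind the product bias.) For any θ ∈ ℝ and deterministic π̂, m̂, E[IF(θ,X,R,T;π̂,m̂)] = E[ P(T=0|X)·(π̂(X) − π⋆(X))·(m⋆(θ,X) − m̂(θ,X)) ] + E[ P(T=1|X)·(m⋆(θ,X) − (1−α)) ]. -/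
open MeasureTheory ProbabilityTheory

/-- Key algebraic identity behind the product bias: for any `θ` and deterministic
`π̂, m̂`,
`E[IF(θ,X,R,T;π̂,m̂)] = E[P(T=0|X)·(π̂(X) − π⋆(X))·(m⋆(θ,X) − m̂(θ,X))]
   + E[P(T=1|X)·(m⋆(θ,X) − (1−α))]`. -/
theorem IF_product_bias_identity
    {Ω 𝒳 : Type*} [MeasurableSpace Ω] [MeasurableSpace 𝒳]
    (P : Measure Ω) [IsProbabilityMeasure P]
    (X : Ω → 𝒳) (T : Ω → Bool) (R : Ω → ℝ)
    (hX : Measurable X) (hT : Measurable T) (hR : Measurable R)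
    (α : ℝ) (hα : α ∈ Set.Ioo (0 : ℝ) 1)
    (e : 𝒳 → ℝ) (mstar : ℝ → 𝒳 → ℝ)
    (hemeas : Measurable e) (hebd : ∀ x, e x ∈ Set.Icc (0 : ℝ) 1)
    (hmsmeas : ∀ θ, Measurable (mstar θ)) (hmsbd : ∀ θ x, mstar θ x ∈ Set.Icc (0 : ℝ) 1)
    -- `e(x)` is a version of `P(T = 1 | X = x)`
    (he : (fun ω => e (X ω)) =ᵐ[P]
      P[fun ω => (if T ω then (1 : ℝ) else 0) | MeasurableSpace.comap X inferInstance])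
    (hepos : ∀ᵐ ω ∂P, e (X ω) < 1)
    -- `mstar(θ,x)` is a version of `P(R ≤ θ | X = x)`
    (hms : ∀ θ : ℝ, (fun ω => mstar θ (X ω)) =ᵐ[P]
      P[fun ω => (if R ω ≤ θ then (1 : ℝ) else 0) | MeasurableSpace.comap X inferInstance])
    -- conditional independence of `R` and `T` given `X`
    (hCI : ∀ θ : ℝ,
      P[fun ω => (if T ω then (1 : ℝ) else 0) * (if R ω ≤ θ then (1 : ℝ) else 0)
        | MeasurableSpace.comap X inferInstance]
      =ᵐ[P] fun ω => e (X ω) * mstar θ (X ω))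
    -- deterministic nuisance estimates
    (πhat : 𝒳 → ℝ) (mhat : ℝ → 𝒳 → ℝ)
    (hπhmeas : Measurable πhat) (hπhint : Integrable (fun ω => πhat (X ω)) P)
    (hmhmeas : ∀ θ, Measurable (mhat θ)) (hmhbd : ∃ C, ∀ θ x, |mhat θ x| ≤ C)
    (θ : ℝ) :
    ∫ ω, IFfun α πhat mhat θ (X ω) (R ω) (T ω) ∂P
      = (∫ ω, (1 - e (X ω)) * (πhat (X ω) - e (X ω) / (1 - e (X ω))) *
            (mstar θ (X ω) - mhat θ (X ω)) ∂P)
        + ∫ ω, e (X ω) * (mstar θ (X ω) - (1 - α)) ∂P := by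
  classical
  obtain ⟨C, hC⟩ := hmhbd
  have hmle : MeasurableSpace.comap X inferInstance ≤ ‹MeasurableSpace Ω› := hX.comap_le
  haveI : SigmaFinite (P.trim hmle) := by infer_instance
  -- shorthands
  set t : Ω → ℝ := fun ω => if T ω then (1 : ℝ) else 0 with ht_def
  set r : Ω → ℝ := fun ω => if R ω ≤ θ then (1 : ℝ) else 0 with hr_def
  have htmeas : Measurable t := (measurable_of_countable (fun b : Bool => if b then (1:ℝ) else 0)).comp hT
  have hrmeas : Measurable r :=
    Measurable.ite (measurableSet_le hR measurable_const) measurable_const measurable_const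
  have htbd : ∀ ω, |t ω| ≤ 1 := by
    intro ω; by_cases h : T ω <;> simp [ht_def, h]
  have hrbd : ∀ ω, |r ω| ≤ 1 := by
    intro ω; by_cases h : R ω ≤ θ <;> simp [hr_def, h]
  have htrbd : ∀ ω, |t ω * r ω| ≤ 1 := by
    intro ω
    calc |t ω * r ω| = |t ω| * |r ω| := abs_mul _ _
      _ ≤ 1 * 1 := mul_le_mul (htbd ω) (hrbd ω) (abs_nonneg _) zero_le_one
      _ = 1 := by ring
  -- integrability of bounded a.e.-strongly measurable functions
  have bddInt : ∀ (f : Ω → ℝ) (c : ℝ), AEStronglyMeasurable f P → (∀ ω, |f ω| ≤ c) →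
      Integrable f P := fun f c hf hb =>
    (integrable_const c).mono' hf (ae_of_all _ fun ω => by simpa using hb ω)
  -- integrable × bounded is integrable
  have mulBdd : ∀ (f Y : Ω → ℝ) (c : ℝ), Integrable f P → AEStronglyMeasurable Y P →
      (∀ ω, |Y ω| ≤ c) → Integrable (fun ω => f ω * Y ω) P := fun f Y c hf hYm hYb =>
    (hf.bdd_mul hYm (ae_of_all _ fun ω => by simpa using hYb ω)).congr
      (ae_of_all _ fun ω => mul_comm _ _)
  -- key: ∫ h(X)·Y = ∫ h(X)·v(X) when v(X) is a version of E[Y|X]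
  have key : ∀ (h v : 𝒳 → ℝ) (Y : Ω → ℝ), Measurable h →
      Integrable Y P → Integrable (fun ω => h (X ω) * Y ω) P →
      (fun ω => v (X ω)) =ᵐ[P] P[Y | MeasurableSpace.comap X inferInstance] →
      ∫ ω, h (X ω) * Y ω ∂P = ∫ ω, h (X ω) * v (X ω) ∂P := by
    intro h v Y hh hY hhY hv
    have hsm : StronglyMeasurable[MeasurableSpace.comap X inferInstance] (fun ω => h (X ω)) :=
      (hh.comp (Measurable.of_comap_le le_rfl)).stronglyMeasurable
    calc ∫ ω, h (X ω) * Y ω ∂P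
        = ∫ ω, (P[fun ω => h (X ω) * Y ω | MeasurableSpace.comap X inferInstance]) ω ∂P :=
          (integral_condExp hmle).symm
      _ = ∫ ω, h (X ω) * (P[Y | MeasurableSpace.comap X inferInstance]) ω ∂P :=
          integral_congr_ae (condExp_mul_of_stronglyMeasurable_left hsm hhY hY)
      _ = ∫ ω, h (X ω) * v (X ω) ∂P :=
          integral_congr_ae (by filter_upwards [hv] with ω hω; rw [← hω])
  -- X-composed functions
  have hπX := hπhmeas.comp hX
  have heX := hemeas.comp hX
  have hmsX := (hmsmeas θ).comp hX
  have hmhX := (hmhmeas θ).comp hX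
  have hebd1 : ∀ x, |e x| ≤ 1 := fun x => abs_le.mpr ⟨by linarith [(hebd x).1], (hebd x).2⟩
  have hmsbd1 : ∀ x, |mstar θ x| ≤ 1 :=
    fun x => abs_le.mpr ⟨by linarith [(hmsbd θ x).1], (hmsbd θ x).2⟩
  have add4 : ∀ (f g h k : Ω → ℝ), Integrable f P → Integrable g P → Integrable h P →
      Integrable k P →
      ∫ ω, f ω + (g ω + (h ω + k ω)) ∂P
        = (∫ ω, f ω ∂P) + ((∫ ω, g ω ∂P) + ((∫ ω, h ω ∂P) + ∫ ω, k ω ∂P)) := by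
    intro f g h k hf hg hh hk
    have h1 := integral_add hh hk
    have h2 := integral_add hg (hh.add hk)
    have h3 := integral_add hf (hg.add (hh.add hk))
    simp only [Pi.add_apply] at h2 h3
    rw [h3, h2, h1]
  -- the four pieces of IF
  have hdecomp : ∀ ω, IFfun α πhat mhat θ (X ω) (R ω) (T ω)
      = πhat (X ω) * r ω + ((-(πhat (X ω))) * (t ω * r ω)
        + ((πhat (X ω) * mhat θ (X ω) + mhat θ (X ω) - (1 - α)) * t ω
          + (-(πhat (X ω) * mhat θ (X ω))))) := by
    intro ω
    by_cases h : T ω <;> by_cases h2 : R ω ≤ θ <;> simp [IFfun, ht_def, hr_def, h, h2] <;> ring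
  -- integrability of the four pieces
  have intA : Integrable (fun ω => πhat (X ω) * r ω) P :=
    mulBdd _ _ 1 hπhint hrmeas.aestronglyMeasurable hrbd
  have intB : Integrable (fun ω => (-(πhat (X ω))) * (t ω * r ω)) P :=
    mulBdd _ _ 1 hπhint.neg ((htmeas.mul hrmeas).aestronglyMeasurable) htrbd
  have intPM : Integrable (fun ω => πhat (X ω) * mhat θ (X ω)) P :=
    mulBdd _ _ C hπhint hmhX.aestronglyMeasurable (fun ω => hC θ (X ω))
  have intMh : Integrable (fun ω => mhat θ (X ω)) P :=
    bddInt _ C hmhX.aestronglyMeasurable (fun ω => hC θ (X ω))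
  have intH : Integrable (fun ω => πhat (X ω) * mhat θ (X ω) + mhat θ (X ω) - (1 - α)) P :=
    (intPM.add intMh).sub (integrable_const _)
  have intC : Integrable (fun ω => (πhat (X ω) * mhat θ (X ω) + mhat θ (X ω) - (1 - α)) * t ω) P :=
    mulBdd _ _ 1 intH htmeas.aestronglyMeasurable htbd
  have intD : Integrable (fun ω => -(πhat (X ω) * mhat θ (X ω))) P := intPM.neg
  -- compute the four integrals via `key`
  have eqA : ∫ ω, πhat (X ω) * r ω ∂P = ∫ ω, πhat (X ω) * mstar θ (X ω) ∂P :=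
    key πhat (mstar θ) r hπhmeas
      (bddInt _ 1 hrmeas.aestronglyMeasurable hrbd) intA (hms θ)
  have eqB : ∫ ω, (-(πhat (X ω))) * (t ω * r ω) ∂P
      = ∫ ω, (-(πhat (X ω))) * (e (X ω) * mstar θ (X ω)) ∂P :=
    key (fun x => -(πhat x)) (fun x => e x * mstar θ x) (fun ω => t ω * r ω) hπhmeas.neg
      (bddInt _ 1 ((htmeas.mul hrmeas).aestronglyMeasurable) htrbd) intB (hCI θ).symm
  have eqC : ∫ ω, (πhat (X ω) * mhat θ (X ω) + mhat θ (X ω) - (1 - α)) * t ω ∂P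
      = ∫ ω, (πhat (X ω) * mhat θ (X ω) + mhat θ (X ω) - (1 - α)) * e (X ω) ∂P :=
    key (fun x => πhat x * mhat θ x + mhat θ x - (1 - α)) e t
      ((hπhmeas.mul (hmhmeas θ)).add (hmhmeas θ) |>.sub measurable_const)
      (bddInt _ 1 htmeas.aestronglyMeasurable htbd) intC he
  -- integrability of the X-side pieces
  have intA' : Integrable (fun ω => πhat (X ω) * mstar θ (X ω)) P :=
    mulBdd _ _ 1 hπhint hmsX.aestronglyMeasurable (fun ω => hmsbd1 (X ω))
  have intB' : Integrable (fun ω => (-(πhat (X ω))) * (e (X ω) * mstar θ (X ω))) P := by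
    refine mulBdd _ _ 1 hπhint.neg (heX.mul hmsX).aestronglyMeasurable (fun ω => ?_)
    calc |e (X ω) * mstar θ (X ω)| = |e (X ω)| * |mstar θ (X ω)| := abs_mul _ _
      _ ≤ 1 * 1 := mul_le_mul (hebd1 _) (hmsbd1 _) (abs_nonneg _) zero_le_one
      _ = 1 := by ring
  have intC' : Integrable (fun ω => (πhat (X ω) * mhat θ (X ω) + mhat θ (X ω) - (1 - α)) * e (X ω)) P :=
    mulBdd _ _ 1 intH heX.aestronglyMeasurable (fun ω => hebd1 (X ω))
  -- the two RHS integrands, rewritten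
  have intW1 : Integrable (fun ω => (1 - e (X ω)) * πhat (X ω) * (mstar θ (X ω) - mhat θ (X ω))
      - e (X ω) * (mstar θ (X ω) - mhat θ (X ω))) P := by
    have h1 : Integrable (fun ω => (1 - e (X ω)) * πhat (X ω) * (mstar θ (X ω) - mhat θ (X ω))) P := by
      have : Integrable (fun ω => πhat (X ω) * ((1 - e (X ω)) * (mstar θ (X ω) - mhat θ (X ω)))) P := by
        refine mulBdd _ _ (2 * (1 + C)) hπhint
          (((measurable_const.sub heX).mul (hmsX.sub hmhX)).aestronglyMeasurable) (fun ω => ?_)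
        have h2 : |1 - e (X ω)| ≤ 2 := by
          rcases hebd (X ω) with ⟨h0, h1⟩
          rw [abs_le]; constructor <;> linarith
        have h3 : |mstar θ (X ω) - mhat θ (X ω)| ≤ 1 + C :=
          (abs_sub _ _).trans (add_le_add (hmsbd1 _) (hC θ (X ω)))
        calc |(1 - e (X ω)) * (mstar θ (X ω) - mhat θ (X ω))|
            = |1 - e (X ω)| * |mstar θ (X ω) - mhat θ (X ω)| := abs_mul _ _
          _ ≤ 2 * (1 + C) := by
              apply mul_le_mul h2 h3 (abs_nonneg _)
              norm_num
      exact this.congr (ae_of_all _ fun ω => by ring)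
    have h2 : Integrable (fun ω => e (X ω) * (mstar θ (X ω) - mhat θ (X ω))) P := by
      refine bddInt _ (1 * (1 + C)) ((heX.mul (hmsX.sub hmhX)).aestronglyMeasurable) (fun ω => ?_)
      have h3 : |mstar θ (X ω) - mhat θ (X ω)| ≤ 1 + C :=
        (abs_sub _ _).trans (add_le_add (hmsbd1 _) (hC θ (X ω)))
      calc |e (X ω) * (mstar θ (X ω) - mhat θ (X ω))|
          = |e (X ω)| * |mstar θ (X ω) - mhat θ (X ω)| := abs_mul _ _
        _ ≤ 1 * (1 + C) := by
            apply mul_le_mul (hebd1 _) h3 (abs_nonneg _)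
            norm_num
    exact h1.sub h2
  have intW2 : Integrable (fun ω => e (X ω) * (mstar θ (X ω) - (1 - α))) P := by
    refine bddInt _ (1 * (1 + |1 - α|)) ((heX.mul (hmsX.sub measurable_const)).aestronglyMeasurable)
      (fun ω => ?_)
    have h3 : |mstar θ (X ω) - (1 - α)| ≤ 1 + |1 - α| :=
      (abs_sub _ _).trans (add_le_add (hmsbd1 _) le_rfl)
    calc |e (X ω) * (mstar θ (X ω) - (1 - α))|
        = |e (X ω)| * |mstar θ (X ω) - (1 - α)| := abs_mul _ _
      _ ≤ 1 * (1 + |1 - α|) := by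
          apply mul_le_mul (hebd1 _) h3 (abs_nonneg _)
          positivity
  -- rewrite the first RHS integral using e < 1 a.e.
  have rhs1 : ∫ ω, (1 - e (X ω)) * (πhat (X ω) - e (X ω) / (1 - e (X ω))) *
        (mstar θ (X ω) - mhat θ (X ω)) ∂P
      = ∫ ω, (1 - e (X ω)) * πhat (X ω) * (mstar θ (X ω) - mhat θ (X ω))
          - e (X ω) * (mstar θ (X ω) - mhat θ (X ω)) ∂P := by
    refine integral_congr_ae ?_
    filter_upwards [hepos] with ω hω
    have hne : 1 - e (X ω) ≠ 0 := by linarith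
    field_simp
  -- assemble
  calc ∫ ω, IFfun α πhat mhat θ (X ω) (R ω) (T ω) ∂P
      = ∫ ω, πhat (X ω) * r ω + ((-(πhat (X ω))) * (t ω * r ω)
        + ((πhat (X ω) * mhat θ (X ω) + mhat θ (X ω) - (1 - α)) * t ω
          + (-(πhat (X ω) * mhat θ (X ω))))) ∂P := by
        exact integral_congr_ae (ae_of_all _ hdecomp)
    _ = (∫ ω, πhat (X ω) * r ω ∂P) + (((∫ ω, (-(πhat (X ω))) * (t ω * r ω) ∂P))
        + (((∫ ω, (πhat (X ω) * mhat θ (X ω) + mhat θ (X ω) - (1 - α)) * t ω ∂P))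
          + ∫ ω, -(πhat (X ω) * mhat θ (X ω)) ∂P)) := by
        exact add4 _ _ _ _ intA intB intC intD
    _ = (∫ ω, πhat (X ω) * mstar θ (X ω) ∂P)
        + (((∫ ω, (-(πhat (X ω))) * (e (X ω) * mstar θ (X ω)) ∂P))
        + (((∫ ω, (πhat (X ω) * mhat θ (X ω) + mhat θ (X ω) - (1 - α)) * e (X ω) ∂P))
          + ∫ ω, -(πhat (X ω) * mhat θ (X ω)) ∂P)) := by rw [eqA, eqB, eqC]
    _ = ∫ ω, πhat (X ω) * mstar θ (X ω) + ((-(πhat (X ω))) * (e (X ω) * mstar θ (X ω))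
        + ((πhat (X ω) * mhat θ (X ω) + mhat θ (X ω) - (1 - α)) * e (X ω)
          + (-(πhat (X ω) * mhat θ (X ω))))) ∂P := by
        exact (add4 _ _ _ _ intA' intB' intC' intD).symm
    _ = ∫ ω, ((1 - e (X ω)) * πhat (X ω) * (mstar θ (X ω) - mhat θ (X ω))
          - e (X ω) * (mstar θ (X ω) - mhat θ (X ω)))
        + e (X ω) * (mstar θ (X ω) - (1 - α)) ∂P := by
        exact integral_congr_ae (ae_of_all _ fun ω => by ring)
    _ = (∫ ω, (1 - e (X ω)) * πhat (X ω) * (mstar θ (X ω) - mhat θ (X ω))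
          - e (X ω) * (mstar θ (X ω) - mhat θ (X ω)) ∂P)
        + ∫ ω, e (X ω) * (mstar θ (X ω) - (1 - α)) ∂P := integral_add intW1 intW2
    _ = _ := by rw [rhs1]
end

section
/- (DKW-based prediction coverage.) Let R₁,…,R_m, R be i.i.d. real random variables. Let r̂ be any (data-dependent) point at which the empirical CDF F̂_m of R₁,…,R_m satisfies F̂_m(r̂) ≥ (1−α) + √(2/m). Then P(R ≤ r̂) ≥ 1 − α − 2·sup_t |F̂_m(t) − F(t)| + √(2/m) conditional on the sample, and unconditionally E[P(R ≤ r̂ | R₁,…,R_m)] ≥ 1 − α, using E[sup_t |F̂_m(t) − F(t)|] ≤ √(2/m). -/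
open MeasureTheory

/-- DKW-based prediction coverage: if `r̂` is a (data-dependent) point at which the
empirical CDF satisfies `F̂_m(r̂) ≥ (1−α) + √(2/m)`, then conditionally
`F(r̂) ≥ 1 − α − 2·sup_t|F̂_m(t) − F(t)| + √(2/m)`, and unconditionally (using the DKW
expectation bound `E[sup_t |F̂_m(t) − F(t)|] ≤ √(2/m)`) `E[F(r̂)] ≥ 1 − α`. -/
theorem dkw_prediction_coverage
    {Ω : Type*} [MeasurableSpace Ω]
    (P : Measure Ω) [IsProbabilityMeasure P]
    (m : ℕ) (hm : 0 < m)
    (α : ℝ) (hα : α ∈ Set.Ioo (0 : ℝ) 1)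
    -- the sample and the independent test point, with common CDF `F`
    (Rs : Fin m → Ω → ℝ) (R : Ω → ℝ) (hRs : ∀ i, Measurable (Rs i)) (hR : Measurable R)
    (F : ℝ → ℝ) (hF : ∀ t, F t = (P {ω | R ω ≤ t}).toReal)
    -- empirical CDF of the sample
    (Fhat : Ω → ℝ → ℝ)
    (hFhat : ∀ ω t, Fhat ω t = (∑ i, if Rs i ω ≤ t then (1 : ℝ) else 0) / m)
    -- the data-dependent threshold
    (rhat : Ω → ℝ)
    (hrhat : ∀ ω, (1 - α) + Real.sqrt (2 / m) ≤ Fhat ω (rhat ω))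
    -- DKW expectation bound
    (hDKW : ∫ ω, (⨆ t : ℝ, |Fhat ω t - F t|) ∂P ≤ Real.sqrt (2 / m))
    -- integrability of the relevant random variables
    (hint1 : Integrable (fun ω => ⨆ t : ℝ, |Fhat ω t - F t|) P)
    (hint2 : Integrable (fun ω => F (rhat ω)) P) :
    (∀ ω, 1 - α - 2 * (⨆ t : ℝ, |Fhat ω t - F t|) + Real.sqrt (2 / m) ≤ F (rhat ω)) ∧
      1 - α ≤ ∫ ω, F (rhat ω) ∂P := by

  obtain ⟨hα0, hα1⟩ := hα
  have hF01 : ∀ t, 0 ≤ F t ∧ F t ≤ 1 := by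
    intro t
    rw [hF]
    exact ⟨ENNReal.toReal_nonneg, ENNReal.toReal_le_of_le_ofReal one_pos.le (by simpa using prob_le_one)⟩
  have hFhat01 : ∀ ω t, 0 ≤ Fhat ω t ∧ Fhat ω t ≤ 1 := by
    intro ω t
    rw [hFhat]
    have hmpos : (0:ℝ) < m := by exact_mod_cast hm
    constructor
    · apply div_nonneg _ hmpos.le
      apply Finset.sum_nonneg
      intro i _
      split <;> norm_num
    · rw [div_le_one hmpos]
      calc (∑ i, if Rs i ω ≤ t then (1:ℝ) else 0) ≤ ∑ _i : Fin m, (1:ℝ) := by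
            apply Finset.sum_le_sum; intro i _; split <;> norm_num
        _ = m := by simp
  have hbdd : ∀ ω, BddAbove (Set.range fun t : ℝ => |Fhat ω t - F t|) := by
    intro ω
    refine ⟨2, ?_⟩
    rintro x ⟨t, rfl⟩
    have h1 := hF01 t
    have h2 := hFhat01 ω t
    rw [abs_le]; constructor <;> linarith [h1.1, h1.2, h2.1, h2.2]
  have key : ∀ ω, 1 - α + Real.sqrt (2 / m) - (⨆ t : ℝ, |Fhat ω t - F t|) ≤ F (rhat ω) := by
    intro ω
    have hle : |Fhat ω (rhat ω) - F (rhat ω)| ≤ ⨆ t : ℝ, |Fhat ω t - F t| :=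
      le_ciSup (hbdd ω) (rhat ω)
    have habs := abs_le.mp (le_refl |Fhat ω (rhat ω) - F (rhat ω)|)
    have := hrhat ω
    have h3 : Fhat ω (rhat ω) - F (rhat ω) ≤ |Fhat ω (rhat ω) - F (rhat ω)| := le_abs_self _
    linarith
  have hSnn : ∀ ω, 0 ≤ ⨆ t : ℝ, |Fhat ω t - F t| := by
    intro ω
    exact le_trans (abs_nonneg _) (le_ciSup (hbdd ω) 0)
  constructor
  · intro ω
    have := key ω
    have := hSnn ω
    linarith
  · have hmono : ∫ ω, (1 - α + Real.sqrt (2 / m) - (⨆ t : ℝ, |Fhat ω t - F t|)) ∂P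
        ≤ ∫ ω, F (rhat ω) ∂P := by
      apply integral_mono ((integrable_const _).sub hint1) hint2
      intro ω; exact key ω
    rw [integral_sub (integrable_const _) hint1, integral_const] at hmono
    simp only [measure_univ, probReal_univ, ENNReal.toReal_one, smul_eq_mul, one_mul] at hmono
    linarith
end

section
/- (Infinite expected width.) Let Ĉ(X) ⊆ ℝ be a random subset of ℝ (depending on X and training data) such that for every y ∈ ℝ, P(y ∈ Ĉ(X)) ≥ 1 − α with α ∈ (0,1). Define L(X) = inf Ĉ(X) and U(X) = sup Ĉ(X). Then P(L(X) = −∞) ≥ 1 − α and P(U(X) = +∞) ≥ 1 − α; in particular E[Leb(Ĉ(X))] = ∞ if Ĉ(X) contains the interval (L(X), U(X)) whenever nonempty, or more simply if Ĉ(X) always is an interval. -/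
open MeasureTheory

lemma iew_aux {Ω : Type*} [MeasurableSpace Ω]
    (P : Measure Ω) [IsProbabilityMeasure P] {r : ENNReal}
    (B : ℕ → Set Ω) (hm : ∀ n, MeasurableSet (B n)) (hanti : Antitone B)
    (hB : ∀ n, r ≤ P (B n)) : r ≤ P (⋂ n, B n) := by
  rw [Directed.measure_iInter (fun n => (hm n).nullMeasurableSet)
    (hanti.directed_ge) ⟨0, measure_ne_top P _⟩]
  exact le_iInf hB

/-- Infinite expected width: if a random set `Ĉ(X) ⊆ ℝ` satisfies
`P(y ∈ Ĉ(X)) ≥ 1 − α` for every `y ∈ ℝ`, then `P(Ĉ(X) unbounded below) ≥ 1 − α` and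
`P(Ĉ(X) unbounded above) ≥ 1 − α`; in particular if `Ĉ(X)` is always an interval then the
expected Lebesgue measure of `Ĉ(X)` is infinite. -/
theorem infinite_expected_width
    {Ω : Type*} [MeasurableSpace Ω]
    (P : Measure Ω) [IsProbabilityMeasure P]
    (α : ℝ) (hα : α ∈ Set.Ioo (0 : ℝ) 1)
    (C : Ω → Set ℝ)
    (hmB : ∀ y : ℝ, MeasurableSet {ω | ∃ c ∈ C ω, c ≤ y})
    (hmA : ∀ y : ℝ, MeasurableSet {ω | ∃ c ∈ C ω, y ≤ c})
    (hcov : ∀ y : ℝ, 1 - α ≤ (P {ω | y ∈ C ω}).toReal)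
    (hInterval : ∀ ω, (C ω).OrdConnected) :
    1 - α ≤ (P {ω | ¬ BddBelow (C ω)}).toReal ∧
    1 - α ≤ (P {ω | ¬ BddAbove (C ω)}).toReal ∧
    ∫⁻ ω, volume (C ω) ∂P = ⊤ := by
  obtain ⟨hα0, hα1⟩ := hα
  have hr0 : (0:ℝ) < 1 - α := by linarith
  set r := ENNReal.ofReal (1 - α) with hrdef
  have hrpos : 0 < r := ENNReal.ofReal_pos.mpr hr0
  have hcov' : ∀ y : ℝ, r ≤ P {ω | y ∈ C ω} := fun y =>
    ENNReal.ofReal_le_of_le_toReal (hcov y)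
  -- below
  have hAeq : {ω | ¬ BddBelow (C ω)} = ⋂ n : ℕ, {ω | ∃ c ∈ C ω, c ≤ -(n:ℝ)} := by
    ext ω
    simp only [Set.mem_setOf_eq, Set.mem_iInter, not_bddBelow_iff]
    constructor
    · intro h n
      obtain ⟨y, hy, hlt⟩ := h (-(n:ℝ))
      exact ⟨y, hy, hlt.le⟩
    · intro h x
      obtain ⟨n, hn⟩ := exists_nat_gt (-x)
      obtain ⟨c, hc, hcle⟩ := h n
      exact ⟨c, hc, hcle.trans_lt (by linarith)⟩
  have hrA : r ≤ P {ω | ¬ BddBelow (C ω)} := by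
    rw [hAeq]
    refine iew_aux P _ (fun n => hmB _) ?_ ?_
    · intro m n hmn ω hω
      obtain ⟨c, hc, hle⟩ := hω
      exact ⟨c, hc, hle.trans (by simp; exact_mod_cast hmn)⟩
    · intro n
      refine le_trans (hcov' (-(n:ℝ))) (measure_mono ?_)
      exact fun ω hω => ⟨-(n:ℝ), hω, le_rfl⟩
  -- above
  have hBeq : {ω | ¬ BddAbove (C ω)} = ⋂ n : ℕ, {ω | ∃ c ∈ C ω, (n:ℝ) ≤ c} := by
    ext ω
    simp only [Set.mem_setOf_eq, Set.mem_iInter, not_bddAbove_iff]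
    constructor
    · intro h n
      obtain ⟨y, hy, hlt⟩ := h (n:ℝ)
      exact ⟨y, hy, hlt.le⟩
    · intro h x
      obtain ⟨n, hn⟩ := exists_nat_gt x
      obtain ⟨c, hc, hcle⟩ := h n
      exact ⟨c, hc, lt_of_lt_of_le hn hcle⟩
  have hrB : r ≤ P {ω | ¬ BddAbove (C ω)} := by
    rw [hBeq]
    refine iew_aux P _ (fun n => hmA _) ?_ ?_
    · intro m n hmn ω hω
      obtain ⟨c, hc, hle⟩ := hω
      exact ⟨c, hc, le_trans (by exact_mod_cast hmn) hle⟩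
    · intro n
      refine le_trans (hcov' (n:ℝ)) (measure_mono ?_)
      exact fun ω hω => ⟨(n:ℝ), hω, le_rfl⟩
  have toRealify : ∀ s : Set Ω, r ≤ P s → 1 - α ≤ (P s).toReal := by
    intro s hs
    have := ENNReal.toReal_mono (measure_ne_top P s) hs
    rwa [hrdef, ENNReal.toReal_ofReal hr0.le] at this
  refine ⟨toRealify _ hrA, toRealify _ hrB, ?_⟩
  -- integral
  have hAmeas : MeasurableSet {ω | ¬ BddBelow (C ω)} := by
    rw [hAeq]; exact MeasurableSet.iInter fun n => hmB _
  have hvol : ∀ ω ∈ {ω | ¬ BddBelow (C ω)}, volume (C ω) = ⊤ := by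
    intro ω hω
    simp only [Set.mem_setOf_eq] at hω
    obtain ⟨c, hc, _⟩ := not_bddBelow_iff.mp hω 0
    have hsub : Set.Iic c ⊆ C ω := by
      intro z hz
      obtain ⟨x, hx, hxz⟩ := not_bddBelow_iff.mp hω z
      exact (hInterval ω).out hx hc ⟨hxz.le, hz⟩
    have := measure_mono hsub (μ := volume)
    rw [Real.volume_Iic] at this
    exact top_le_iff.mp this
  have hind : ∀ ω, ({ω | ¬ BddBelow (C ω)}).indicator (fun _ => (⊤ : ENNReal)) ω
      ≤ volume (C ω) := by
    intro ω
    by_cases h : ω ∈ {ω | ¬ BddBelow (C ω)}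
    · rw [Set.indicator_of_mem h, hvol ω h]
    · rw [Set.indicator_of_notMem h]; exact zero_le
  have hle := lintegral_mono (μ := P) hind
  rw [lintegral_indicator hAmeas, setLIntegral_const] at hle
  have hPne : P {ω | ¬ BddBelow (C ω)} ≠ 0 := fun h => by
    rw [h] at hrA
    exact hrpos.ne' (le_antisymm hrA hrpos.le)
  rw [ENNReal.top_mul hPne] at hle
  exact top_le_iff.mp hle
end

section
/- (ITE coverage from one-sided counterfactual coverage.) Let (Y(1), Y(0), A, X) be random with A ∈ {0,1}. Suppose prediction sets Ĉ₀, Ĉ₁ satisfy P(Y(0) ∈ Ĉ₀(X) | A=1) ≥ 1−α and P(Y(1) ∈ Ĉ₁(X) | A=0) ≥ 1−α, with 0 < P(A=1) < 1. Define the ITE prediction set Ĉ^{ITE} = Y(1) − Ĉ₀(X) on {A=1} and Ĉ^{ITE} = Ĉ₁(X) − Y(0) on {A=0} (Minkowski differences with the observed outcome). Then P(Y(1) − Y(0) ∈ Ĉ^{ITE}) ≥ 1 − α. -/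
open MeasureTheory

/-- ITE coverage from one-sided counterfactual coverage: if
`P(Y(0) ∈ Ĉ₀(X) | A=1) ≥ 1−α` and `P(Y(1) ∈ Ĉ₁(X) | A=0) ≥ 1−α`, then the ITE prediction
set `Ĉ^{ITE}` (equal to `Y(1) − Ĉ₀(X)` on `{A=1}` and to `Ĉ₁(X) − Y(0)` on `{A=0}`)
satisfies `P(Y(1) − Y(0) ∈ Ĉ^{ITE}) ≥ 1 − α`. -/
theorem ite_coverage
    {Ω 𝒳 : Type*} [MeasurableSpace Ω] [MeasurableSpace 𝒳]
    (P : Measure Ω) [IsProbabilityMeasure P]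
    (X : Ω → 𝒳) (A : Ω → Bool) (Y1 Y0 : Ω → ℝ)
    (hX : Measurable X) (hA : Measurable A) (hY1 : Measurable Y1) (hY0 : Measurable Y0)
    (hA1 : 0 < P {ω | A ω = true}) (hA0 : 0 < P {ω | A ω = false})
    (α : ℝ) (hα : α ∈ Set.Ioo (0 : ℝ) 1)
    (C0 C1 : 𝒳 → Set ℝ)
    -- `P(Y(0) ∈ Ĉ₀(X) | A = 1) ≥ 1 − α`
    (hcov0 : (1 - α) * (P {ω | A ω = true}).toReal
      ≤ (P {ω | Y0 ω ∈ C0 (X ω) ∧ A ω = true}).toReal)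
    -- `P(Y(1) ∈ Ĉ₁(X) | A = 0) ≥ 1 − α`
    (hcov1 : (1 - α) * (P {ω | A ω = false}).toReal
      ≤ (P {ω | Y1 ω ∈ C1 (X ω) ∧ A ω = false}).toReal)
    -- the ITE prediction set, a Minkowski difference with the observed outcome
    (CITE : Ω → Set ℝ)
    (hCITE : ∀ ω, CITE ω =
      if A ω then (fun c => Y1 ω - c) '' C0 (X ω) else (fun c => c - Y0 ω) '' C1 (X ω)) :
    1 - α ≤ (P {ω | Y1 ω - Y0 ω ∈ CITE ω}).toReal := by
  set T := {ω | Y1 ω - Y0 ω ∈ CITE ω} with hT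
  have hsA : MeasurableSet {ω | A ω = true} := hA (measurableSet_singleton true)
  have hsub1 : {ω | Y0 ω ∈ C0 (X ω) ∧ A ω = true} ⊆ T ∩ {ω | A ω = true} := by
    rintro ω ⟨h0, ha⟩
    refine ⟨?_, ha⟩
    simp only [hT, Set.mem_setOf_eq, hCITE ω, ha, if_true]
    exact ⟨Y0 ω, h0, rfl⟩
  have hsub2 : {ω | Y1 ω ∈ C1 (X ω) ∧ A ω = false} ⊆ T \ {ω | A ω = true} := by
    rintro ω ⟨h1, ha⟩
    refine ⟨?_, by simp [Set.mem_setOf_eq, ha]⟩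
    simp only [hT, Set.mem_setOf_eq, hCITE ω, ha, if_false, Bool.false_eq_true]
    exact ⟨Y1 ω, h1, by ring⟩
  have key : P {ω | Y0 ω ∈ C0 (X ω) ∧ A ω = true}
      + P {ω | Y1 ω ∈ C1 (X ω) ∧ A ω = false} ≤ P T := by
    calc P {ω | Y0 ω ∈ C0 (X ω) ∧ A ω = true}
        + P {ω | Y1 ω ∈ C1 (X ω) ∧ A ω = false}
        ≤ P (T ∩ {ω | A ω = true}) + P (T \ {ω | A ω = true}) :=
          add_le_add (measure_mono hsub1) (measure_mono hsub2)
      _ = P T := measure_inter_add_diff T hsA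
  have hne1 : P {ω | Y0 ω ∈ C0 (X ω) ∧ A ω = true} ≠ ⊤ := measure_ne_top P _
  have hne2 : P {ω | Y1 ω ∈ C1 (X ω) ∧ A ω = false} ≠ ⊤ := measure_ne_top P _
  have keyR : (P {ω | Y0 ω ∈ C0 (X ω) ∧ A ω = true}).toReal
      + (P {ω | Y1 ω ∈ C1 (X ω) ∧ A ω = false}).toReal ≤ (P T).toReal := by
    rw [← ENNReal.toReal_add hne1 hne2]
    exact ENNReal.toReal_mono (measure_ne_top P _) key
  have hcompl : {ω | A ω = false} = {ω | A ω = true}ᶜ := by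
    ext ω; simp [Set.mem_setOf_eq]
  have hpart : (P {ω | A ω = true}).toReal + (P {ω | A ω = false}).toReal = 1 := by
    rw [hcompl, ← ENNReal.toReal_add (measure_ne_top P _) (measure_ne_top P _),
      measure_add_measure_compl hsA]
    simp
  calc 1 - α = (1 - α) * (P {ω | A ω = true}).toReal
        + (1 - α) * (P {ω | A ω = false}).toReal := by rw [← mul_add, hpart, mul_one]
    _ ≤ (P {ω | Y0 ω ∈ C0 (X ω) ∧ A ω = true}).toReal
        + (P {ω | Y1 ω ∈ C1 (X ω) ∧ A ω = false}).toReal := add_le_add hcov0 hcov1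
    _ ≤ (P T).toReal := keyR
end

section
/- (Sensitivity-analysis double robustness, η side.) Suppose (X, Y, T) satisfies exp{−η⋆(X) − γ⋆(X,Y)} = P(T=1|X,Y)/P(T=0|X,Y) a.s., with P(T=0|X,Y) > 0. Then for any bounded measurable m(θ,x) and any θ, E[ 𝟙{T=0} exp{−η⋆(X) − γ⋆(X,Y)} (𝟙{R ≤ θ} − m(θ,X)) + 𝟙{T=1}(m(θ,X) − (1−α)) ] = P(T=1)·( E[𝟙{R ≤ θ} | T=1] − (1−α) ), where R = R(X,Y) for a fixed measurable R. In particular this expectation is 0 at θ = r_α with P(R ≤ r_α | T=1) = 1−α. -/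
open MeasureTheory ProbabilityTheory

/-- Key transfer lemma: integrating a `σ(Z)`-measurable integrable `h` against the
indicator of `T = 1` equals integrating it against the conditional probability `e1 ∘ Z`. -/
lemma int_mul_indT {Ω 𝒵 : Type*} [MeasurableSpace Ω] [MeasurableSpace 𝒵]
    (P : Measure Ω) [IsProbabilityMeasure P]
    (Z : Ω → 𝒵) (hZ : Measurable Z) (T : Ω → Bool) (hT : Measurable T)
    (e1 : 𝒵 → ℝ)
    (he1 : (fun ω => e1 (Z ω)) =ᵐ[P]
      P[fun ω => (if T ω then (1 : ℝ) else 0) | MeasurableSpace.comap Z inferInstance])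
    (h : Ω → ℝ) (hh : Integrable h P)
    (hhm : StronglyMeasurable[MeasurableSpace.comap Z inferInstance] h) :
    ∫ ω, h ω * (if T ω then (1 : ℝ) else 0) ∂P = ∫ ω, h ω * e1 (Z ω) ∂P := by
  have hle : MeasurableSpace.comap Z inferInstance ≤ ‹MeasurableSpace Ω› := hZ.comap_le
  set ind : Ω → ℝ := fun ω => (if T ω then (1 : ℝ) else 0) with hind_def
  have hindmeas : Measurable ind :=
    Measurable.ite (hT (measurableSet_singleton true)) measurable_const measurable_const
  have hind : Integrable ind P := by
    refine (integrable_const (1 : ℝ)).mono' hindmeas.aestronglyMeasurable ?_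
    filter_upwards with ω
    by_cases hω : T ω <;> simp [ind, hω]
  have hfg : Integrable (h * ind) P := by
    have := Integrable.bdd_mul (f := ind) (g := h) (c := 1) hh hindmeas.aestronglyMeasurable
      (Filter.Eventually.of_forall fun ω => by by_cases hω : T ω <;> simp [ind, hω])
    refine this.congr ?_
    filter_upwards with ω using mul_comm _ _
  have hce := condExp_mul_of_stronglyMeasurable_left hhm hfg hind
  calc ∫ ω, h ω * ind ω ∂P = ∫ ω, (h * ind) ω ∂P := rfl
    _ = ∫ ω, (P[h * ind|MeasurableSpace.comap Z inferInstance]) ω ∂P :=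
        (integral_condExp hle).symm
    _ = ∫ ω, h ω * (P[ind|MeasurableSpace.comap Z inferInstance]) ω ∂P :=
        integral_congr_ae hce
    _ = ∫ ω, h ω * e1 (Z ω) ∂P := by
        refine integral_congr_ae ?_
        filter_upwards [he1] with ω hω
        rw [hω]

/-- Sensitivity-analysis double robustness, η side: if
`exp{−η⋆(X) − γ⋆(X,Y)} = P(T=1|X,Y)/P(T=0|X,Y)` a.s., then for any bounded measurable `m`
and any `θ`,
`E[𝟙{T=0} e^{−η⋆(X)−γ⋆(X,Y)}(𝟙{R ≤ θ} − m(θ,X)) + 𝟙{T=1}(m(θ,X) − (1−α))]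
  = P(T=1)·(E[𝟙{R ≤ θ}|T=1] − (1−α))`;
in particular this is `0` at `θ = r_α` when `P(R ≤ r_α | T=1) = 1−α`. -/
theorem sensitivity_double_robustness_eta
    {Ω 𝒳 : Type*} [MeasurableSpace Ω] [MeasurableSpace 𝒳]
    (P : Measure Ω) [IsProbabilityMeasure P]
    (X : Ω → 𝒳) (Y : Ω → ℝ) (T : Ω → Bool)
    (hX : Measurable X) (hY : Measurable Y) (hT : Measurable T)
    (hT1 : 0 < P {ω | T ω = true})
    (R : 𝒳 × ℝ → ℝ) (hR : Measurable R)
    (α : ℝ) (hα : α ∈ Set.Ioo (0 : ℝ) 1)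
    (ηs : 𝒳 → ℝ) (γs : 𝒳 × ℝ → ℝ) (hηmeas : Measurable ηs) (hγmeas : Measurable γs)
    (e1 : 𝒳 × ℝ → ℝ) (he1meas : Measurable e1) (he1bd : ∀ p, e1 p ∈ Set.Icc (0 : ℝ) 1)
    -- `e1(x,y)` is a version of `P(T = 1 | X = x, Y = y)`
    (he1 : (fun ω => e1 (X ω, Y ω)) =ᵐ[P]
      P[fun ω => (if T ω then (1 : ℝ) else 0)
        | MeasurableSpace.comap (fun ω => (X ω, Y ω)) inferInstance])
    (he1pos : ∀ᵐ ω ∂P, e1 (X ω, Y ω) < 1)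
    -- the odds-ratio representation of the sensitivity model
    (hsens : ∀ᵐ ω ∂P, Real.exp (-(ηs (X ω)) - γs (X ω, Y ω))
      = e1 (X ω, Y ω) / (1 - e1 (X ω, Y ω)))
    -- integrability of the conditional odds `P(T=1|X,Y)/P(T=0|X,Y)`
    (hint : Integrable (fun ω => e1 (X ω, Y ω) / (1 - e1 (X ω, Y ω))) P)
    -- arbitrary bounded measurable `m`
    (m : ℝ → 𝒳 → ℝ) (hmmeas : ∀ θ, Measurable (m θ)) (hmbd : ∃ C, ∀ θ x, |m θ x| ≤ C)
    (r : ℝ)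
    (hrα : (P {ω | R (X ω, Y ω) ≤ r ∧ T ω = true}).toReal
      = (1 - α) * (P {ω | T ω = true}).toReal) :
    (∀ θ : ℝ,
      ∫ ω, ((if T ω then (0 : ℝ) else 1) * Real.exp (-(ηs (X ω)) - γs (X ω, Y ω)) *
            ((if R (X ω, Y ω) ≤ θ then (1 : ℝ) else 0) - m θ (X ω))
          + (if T ω then (1 : ℝ) else 0) * (m θ (X ω) - (1 - α))) ∂P
        = (P {ω | T ω = true}).toReal *
            ((∫ ω in {ω | T ω = true}, (if R (X ω, Y ω) ≤ θ then (1 : ℝ) else 0) ∂P)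
              / (P {ω | T ω = true}).toReal - (1 - α))) ∧
    ∫ ω, ((if T ω then (0 : ℝ) else 1) * Real.exp (-(ηs (X ω)) - γs (X ω, Y ω)) *
          ((if R (X ω, Y ω) ≤ r then (1 : ℝ) else 0) - m r (X ω))
        + (if T ω then (1 : ℝ) else 0) * (m r (X ω) - (1 - α))) ∂P = 0 := by
  obtain ⟨C, hC⟩ := hmbd
  have hZ : Measurable (fun ω => (X ω, Y ω)) := hX.prodMk hY
  set sT : Set Ω := {ω | T ω = true} with hsT_def
  have hsTmeas : MeasurableSet sT := hT (measurableSet_singleton true)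
  have hPT : (P sT).toReal ≠ 0 := by
    have h1 : P sT ≠ 0 := hT1.ne'
    have h2 : P sT ≠ ⊤ := (measure_lt_top P sT).ne
    simp [ENNReal.toReal_eq_zero_iff, h1, h2]
  -- indicator of T = 1
  set ind : Ω → ℝ := fun ω => (if T ω then (1 : ℝ) else 0) with hind_def
  have hindmeas : Measurable ind :=
    Measurable.ite hsTmeas measurable_const measurable_const
  have hindbd : ∀ ω, ‖ind ω‖ ≤ 1 := fun ω => by by_cases hω : T ω <;> simp [ind, hω]
  have hind : Integrable ind P :=
    (integrable_const (1 : ℝ)).mono' hindmeas.aestronglyMeasurable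
      (Filter.Eventually.of_forall hindbd)
  have hindint : ∫ ω, ind ω ∂P = (P sT).toReal := by
    have : ind = sT.indicator (fun _ => (1 : ℝ)) := by
      funext ω; by_cases hω : T ω <;> simp [ind, Set.indicator_apply, sT, hω]
    rw [this, integral_indicator hsTmeas]
    simp [setIntegral_const, measureReal_def]
  -- the main identity for each θ
  have main : ∀ θ : ℝ,
      ∫ ω, ((if T ω then (0 : ℝ) else 1) * Real.exp (-(ηs (X ω)) - γs (X ω, Y ω)) *
            ((if R (X ω, Y ω) ≤ θ then (1 : ℝ) else 0) - m θ (X ω))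
          + (if T ω then (1 : ℝ) else 0) * (m θ (X ω) - (1 - α))) ∂P
        = (P sT).toReal *
            ((∫ ω in sT, (if R (X ω, Y ω) ≤ θ then (1 : ℝ) else 0) ∂P)
              / (P sT).toReal - (1 - α)) := by
    intro θ
    -- the bounded measurable function g on 𝒳 × ℝ
    set g : 𝒳 × ℝ → ℝ := fun p => (if R p ≤ θ then (1 : ℝ) else 0) - m θ p.1 with hg_def
    have hgmeas : Measurable g := by
      refine Measurable.sub ?_ ((hmmeas θ).comp measurable_fst)
      exact Measurable.ite (hR measurableSet_Iic) measurable_const measurable_const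
    have hgbd : ∀ p, ‖g p‖ ≤ 1 + C := by
      intro p
      have h1 : ‖(if R p ≤ θ then (1 : ℝ) else 0)‖ ≤ 1 := by
        by_cases hp : R p ≤ θ <;> simp [hp]
      have h2 : ‖m θ p.1‖ ≤ C := by simpa [Real.norm_eq_abs] using hC θ p.1
      calc ‖g p‖ ≤ ‖(if R p ≤ θ then (1 : ℝ) else 0)‖ + ‖m θ p.1‖ := norm_sub_le _ _
        _ ≤ 1 + C := add_le_add h1 h2
    -- the σ(Z)-measurable weight function
    set F : 𝒳 × ℝ → ℝ := fun p => e1 p / (1 - e1 p) * g p with hF_def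
    have hFmeas : Measurable F := (he1meas.div (measurable_const.sub he1meas)).mul hgmeas
    set h : Ω → ℝ := fun ω => F (X ω, Y ω) with hh_def
    have hhmeas : Measurable h := hFmeas.comp hZ
    have hh : Integrable h P := by
      have := Integrable.bdd_mul (f := fun ω => g (X ω, Y ω))
        (g := fun ω => e1 (X ω, Y ω) / (1 - e1 (X ω, Y ω))) hint
        (hgmeas.comp hZ).aestronglyMeasurable (Filter.Eventually.of_forall fun ω => hgbd _)
      refine this.congr ?_
      filter_upwards with ω using mul_comm _ _
    have hhm : StronglyMeasurable[MeasurableSpace.comap (fun ω => (X ω, Y ω)) inferInstance] h := by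
      have : Measurable[MeasurableSpace.comap (fun ω => (X ω, Y ω)) inferInstance]
          (fun ω => (X ω, Y ω)) := measurable_iff_comap_le.mpr le_rfl
      exact (hFmeas.comp this).stronglyMeasurable
    have hgZ : Integrable (fun ω => g (X ω, Y ω)) P :=
      (integrable_const (1 + C)).mono' (hgmeas.comp hZ).aestronglyMeasurable
        (Filter.Eventually.of_forall fun ω => by simpa using hgbd (X ω, Y ω))
    have hgZm : StronglyMeasurable[MeasurableSpace.comap (fun ω => (X ω, Y ω)) inferInstance]
        (fun ω => g (X ω, Y ω)) := by
      have : Measurable[MeasurableSpace.comap (fun ω => (X ω, Y ω)) inferInstance]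
          (fun ω => (X ω, Y ω)) := measurable_iff_comap_le.mpr le_rfl
      exact (hgmeas.comp this).stronglyMeasurable
    -- transfer: ∫ 𝟙{T=0} w g = ∫ 𝟙{T=1} g
    have hhind : Integrable (fun ω => h ω * ind ω) P :=
      (Integrable.bdd_mul (f := ind) (g := h) hh hindmeas.aestronglyMeasurable
        (Filter.Eventually.of_forall hindbd)).congr (Filter.Eventually.of_forall fun ω => mul_comm _ _)
    have key1 : ∫ ω, h ω * ind ω ∂P = ∫ ω, h ω * e1 (X ω, Y ω) ∂P :=
      int_mul_indT P _ hZ T hT e1 he1 h hh hhm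
    have key2 : ∫ ω, g (X ω, Y ω) * ind ω ∂P = ∫ ω, g (X ω, Y ω) * e1 (X ω, Y ω) ∂P :=
      int_mul_indT P _ hZ T hT e1 he1 _ hgZ hgZm
    -- transfer identity
    have transfer : ∫ ω, (if T ω then (0 : ℝ) else 1) *
          Real.exp (-(ηs (X ω)) - γs (X ω, Y ω)) * g (X ω, Y ω) ∂P
        = ∫ ω, ind ω * g (X ω, Y ω) ∂P := by
      have step1 : ∫ ω, (if T ω then (0 : ℝ) else 1) *
            Real.exp (-(ηs (X ω)) - γs (X ω, Y ω)) * g (X ω, Y ω) ∂P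
          = ∫ ω, h ω * (1 - ind ω) ∂P := by
        refine integral_congr_ae ?_
        filter_upwards [hsens] with ω hω
        by_cases hTω : T ω <;> simp [h, F, ind, hTω, hω] <;> ring
      have step2 : ∫ ω, h ω * (1 - ind ω) ∂P = ∫ ω, h ω ∂P - ∫ ω, h ω * ind ω ∂P := by
        have : (fun ω => h ω * (1 - ind ω)) = fun ω => h ω - h ω * ind ω := by
          funext ω; ring
        rw [this, integral_sub hh hhind]
      have step3 : ∫ ω, h ω ∂P - ∫ ω, h ω * e1 (X ω, Y ω) ∂P
          = ∫ ω, h ω * (1 - e1 (X ω, Y ω)) ∂P := by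
        have he1Z : Integrable (fun ω => h ω * e1 (X ω, Y ω)) P :=
          (Integrable.bdd_mul (f := fun ω => e1 (X ω, Y ω)) (g := h) hh
            (he1meas.comp hZ).aestronglyMeasurable
            (Filter.Eventually.of_forall fun ω => by
              have := he1bd (X ω, Y ω)
              rw [Real.norm_eq_abs, abs_le]
              exact ⟨by linarith [this.1], this.2⟩)).congr
            (Filter.Eventually.of_forall fun ω => mul_comm _ _)
        rw [← integral_sub hh he1Z]
        congr 1; funext ω; ring
      have step4 : ∫ ω, h ω * (1 - e1 (X ω, Y ω)) ∂P
          = ∫ ω, g (X ω, Y ω) * e1 (X ω, Y ω) ∂P := by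
        refine integral_congr_ae ?_
        filter_upwards [he1pos] with ω hω
        have hne : (1 : ℝ) - e1 (X ω, Y ω) ≠ 0 := by linarith
        simp only [h, F]
        field_simp
      rw [step1, step2, key1, step3, step4, ← key2]
      refine integral_congr_ae ?_
      filter_upwards with ω using mul_comm _ _
    -- now assemble
    have hmX : Integrable (fun ω => ind ω * (m θ (X ω) - (1 - α))) P := by
      refine (integrable_const (C + |1 - α|)).mono'
        ((hindmeas.mul (((hmmeas θ).comp hX).sub measurable_const))).aestronglyMeasurable ?_
      filter_upwards with ω
      have h1 : ‖m θ (X ω) - (1 - α)‖ ≤ C + |1 - α| := by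
        calc ‖m θ (X ω) - (1 - α)‖ ≤ ‖m θ (X ω)‖ + ‖(1 - α)‖ := norm_sub_le _ _
          _ ≤ C + |1 - α| := by
              simp only [Real.norm_eq_abs]
              exact add_le_add (hC θ (X ω)) le_rfl
      calc ‖ind ω * (m θ (X ω) - (1 - α))‖ = ‖ind ω‖ * ‖m θ (X ω) - (1 - α)‖ := norm_mul _ _
        _ ≤ 1 * (C + |1 - α|) := mul_le_mul (hindbd ω) h1 (norm_nonneg _) zero_le_one
        _ = C + |1 - α| := one_mul _
    have hwg : Integrable (fun ω => (if T ω then (0 : ℝ) else 1) *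
        Real.exp (-(ηs (X ω)) - γs (X ω, Y ω)) * g (X ω, Y ω)) P := by
      have hint' : Integrable (fun ω => h ω * (1 - ind ω)) P :=
        (Integrable.bdd_mul (f := fun ω => 1 - ind ω) (g := h) (c := 1) hh
          (measurable_const.sub hindmeas).aestronglyMeasurable
          (Filter.Eventually.of_forall fun ω => by by_cases hω : T ω <;> simp [ind, hω])).congr
          (Filter.Eventually.of_forall fun ω => mul_comm _ _)
      refine hint'.congr ?_
      filter_upwards [hsens] with ω hω
      by_cases hTω : T ω <;> simp [h, F, ind, hTω, hω] <;> ring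
    rw [integral_add hwg hmX, transfer, ← integral_add
      (Integrable.bdd_mul (f := ind) (g := fun ω => g (X ω, Y ω)) hgZ
        hindmeas.aestronglyMeasurable (Filter.Eventually.of_forall hindbd)) hmX]
    have combine : (fun ω => ind ω * g (X ω, Y ω) + ind ω * (m θ (X ω) - (1 - α)))
        = fun ω => ind ω * (if R (X ω, Y ω) ≤ θ then (1 : ℝ) else 0) - (1 - α) * ind ω := by
      funext ω; simp only [g]; ring
    rw [combine]
    have hind1 : Integrable (fun ω => ind ω * (if R (X ω, Y ω) ≤ θ then (1 : ℝ) else 0)) P := by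
      refine (integrable_const (1 : ℝ)).mono'
        (hindmeas.mul (Measurable.ite ((hR.comp hZ) measurableSet_Iic) measurable_const
          measurable_const)).aestronglyMeasurable ?_
      filter_upwards with ω
      calc ‖ind ω * _‖ = ‖ind ω‖ * ‖(if R (X ω, Y ω) ≤ θ then (1 : ℝ) else 0)‖ := norm_mul _ _
        _ ≤ 1 * 1 := mul_le_mul (hindbd ω)
            (by by_cases hp : R (X ω, Y ω) ≤ θ <;> simp [hp]) (norm_nonneg _) zero_le_one
        _ = 1 := one_mul _
    rw [integral_sub hind1 (hind.const_mul (1 - α))]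
    have hset : ∫ ω, ind ω * (if R (X ω, Y ω) ≤ θ then (1 : ℝ) else 0) ∂P
        = ∫ ω in sT, (if R (X ω, Y ω) ≤ θ then (1 : ℝ) else 0) ∂P := by
      rw [← integral_indicator hsTmeas]
      refine integral_congr_ae (Filter.Eventually.of_forall fun ω => ?_)
      by_cases hω : T ω <;> simp [ind, Set.indicator_apply, sT, hω]
    rw [hset, integral_const_mul, hindint]
    field_simp
  refine ⟨fun θ => main θ, ?_⟩
  rw [main r]
  have hSr : ∫ ω in sT, (if R (X ω, Y ω) ≤ r then (1 : ℝ) else 0) ∂P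
      = (P {ω | R (X ω, Y ω) ≤ r ∧ T ω = true}).toReal := by
    have hA : MeasurableSet {ω | R (X ω, Y ω) ≤ r} :=
      (hR.comp (hX.prodMk hY)) measurableSet_Iic
    have : (fun ω => (if R (X ω, Y ω) ≤ r then (1 : ℝ) else 0))
        = Set.indicator {ω | R (X ω, Y ω) ≤ r} (fun _ => (1 : ℝ)) := by
      funext ω; by_cases hω : R (X ω, Y ω) ≤ r <;> simp [Set.indicator_apply, hω]
    rw [this, setIntegral_indicator hA, setIntegral_const]
    have : sT ∩ {ω | R (X ω, Y ω) ≤ r} = {ω | R (X ω, Y ω) ≤ r ∧ T ω = true} := by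
      ext ω; simp [sT, and_comm]
    rw [this]; simp [measureReal_def]
  rw [hSr, hrα]
  field_simp
  ring
end

section
/- (Sensitivity-analysis double robustness, m side.) Suppose m⋆(θ,x) = P(R ≤ θ | X=x, T=1) satisfies the tilting identity m⋆(θ,x) = E[𝟙{R ≤ θ} e^{−γ⋆(X,Y)} | X=x, T=0] / E[e^{−γ⋆(X,Y)} | X=x, T=0]. Then for any bounded measurable η(x) and any θ, E[ 𝟙{T=0} exp{−η(X) − γ⋆(X,Y)} (𝟙{R ≤ θ} − m⋆(θ,X)) ] = 0, and consequently E[IF(θ; η, m⋆, γ⋆)] = P(T=1)·( E[m⋆(θ,X) | T=1] − (1−α) ). -/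
open MeasureTheory ProbabilityTheory

/-- Sensitivity-analysis double robustness, m side: if
`m⋆(θ,x) = P(R ≤ θ | X=x, T=1)` satisfies the tilting identity
`m⋆(θ,x) = E[𝟙{R≤θ} e^{−γ⋆}|X=x,T=0] / E[e^{−γ⋆}|X=x,T=0]`, then for any bounded measurable
`η` and any `θ`, `E[𝟙{T=0} e^{−η(X)−γ⋆(X,Y)}(𝟙{R ≤ θ} − m⋆(θ,X))] = 0`, and consequently
`E[IF(θ;η,m⋆,γ⋆)] = P(T=1)·(E[m⋆(θ,X)|T=1] − (1−α))`. -/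
theorem sensitivity_double_robustness_m
    {Ω 𝒳 : Type*} [MeasurableSpace Ω] [MeasurableSpace 𝒳]
    (P : Measure Ω) [IsProbabilityMeasure P]
    (X : Ω → 𝒳) (Y : Ω → ℝ) (T : Ω → Bool)
    (hX : Measurable X) (hY : Measurable Y) (hT : Measurable T)
    (hT1 : 0 < P {ω | T ω = true}) (hT0 : 0 < P {ω | T ω = false})
    (R : 𝒳 × ℝ → ℝ) (hR : Measurable R)
    (α : ℝ) (hα : α ∈ Set.Ioo (0 : ℝ) 1)
    (γs : 𝒳 × ℝ → ℝ) (hγmeas : Measurable γs)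
    -- integrability of the tilting weight `e^{−γ⋆(X,Y)}`
    (hint : Integrable (fun ω => Real.exp (-(γs (X ω, Y ω)))) P)
    (mstar : ℝ → 𝒳 → ℝ)
    (hmsmeas : ∀ θ, Measurable (mstar θ)) (hmsbd : ∀ θ x, mstar θ x ∈ Set.Icc (0 : ℝ) 1)
    -- the tilting identity characterizing `m⋆` (a consequence of Bayes' rule), encoded via
    -- conditional expectations given `σ(X)`
    (htilt : ∀ θ : ℝ,
      P[fun ω => (if T ω then (0 : ℝ) else 1) * (if R (X ω, Y ω) ≤ θ then (1 : ℝ) else 0) *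
          Real.exp (-(γs (X ω, Y ω))) | MeasurableSpace.comap X inferInstance]
        =ᵐ[P] fun ω => mstar θ (X ω) *
          ((P[fun ω' => (if T ω' then (0 : ℝ) else 1) * Real.exp (-(γs (X ω', Y ω')))
            | MeasurableSpace.comap X inferInstance]) ω))
    -- arbitrary bounded measurable `η`
    (η : 𝒳 → ℝ) (hηmeas : Measurable η) (hηbd : ∃ C, ∀ x, |η x| ≤ C) :
    (∀ θ : ℝ,
      ∫ ω, (if T ω then (0 : ℝ) else 1) * Real.exp (-(η (X ω)) - γs (X ω, Y ω)) *
          ((if R (X ω, Y ω) ≤ θ then (1 : ℝ) else 0) - mstar θ (X ω)) ∂P = 0) ∧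
    (∀ θ : ℝ,
      ∫ ω, ((if T ω then (0 : ℝ) else 1) * Real.exp (-(η (X ω)) - γs (X ω, Y ω)) *
            ((if R (X ω, Y ω) ≤ θ then (1 : ℝ) else 0) - mstar θ (X ω))
          + (if T ω then (1 : ℝ) else 0) * (mstar θ (X ω) - (1 - α))) ∂P
        = (P {ω | T ω = true}).toReal *
            ((∫ ω in {ω | T ω = true}, mstar θ (X ω) ∂P)
              / (P {ω | T ω = true}).toReal - (1 - α))) := by
  obtain ⟨C, hC⟩ := hηbd
  have hm : MeasurableSpace.comap X inferInstance ≤ ‹MeasurableSpace Ω› := hX.comap_le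
  have hXc : Measurable[MeasurableSpace.comap X inferInstance] X :=
    Measurable.of_comap_le le_rfl
  have hTmeas : Measurable (fun ω => (if T ω then (0:ℝ) else 1)) :=
    (Measurable.of_discrete (f := fun b : Bool => if b then (0:ℝ) else 1)).comp hT
  have hT1meas : Measurable (fun ω => (if T ω then (1:ℝ) else 0)) :=
    (Measurable.of_discrete (f := fun b : Bool => if b then (1:ℝ) else 0)).comp hT
  have hTbd : ∀ ω, |(if T ω then (0:ℝ) else 1)| ≤ 1 := by
    intro ω; split <;> norm_num
  have hexpγ : Measurable (fun ω => Real.exp (-(γs (X ω, Y ω)))) :=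
    ((hγmeas.comp (hX.prodMk hY)).neg).exp
  have hf0int : Integrable (fun ω => (if T ω then (0:ℝ) else 1) *
      Real.exp (-(γs (X ω, Y ω)))) P := by
    refine hint.bdd_mul (c := 1) hTmeas.aestronglyMeasurable (ae_of_all _ fun ω => ?_)
    simpa [Real.norm_eq_abs] using hTbd ω
  have hgbd : ∀ ω, ‖Real.exp (-(η (X ω)))‖ ≤ Real.exp C := by
    intro ω
    rw [Real.norm_eq_abs, abs_of_pos (Real.exp_pos _)]
    exact Real.exp_le_exp.2 ((neg_le_abs _).trans (hC _))
  have key : ∀ θ : ℝ,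
      ∫ ω, (if T ω then (0 : ℝ) else 1) * Real.exp (-(η (X ω)) - γs (X ω, Y ω)) *
          ((if R (X ω, Y ω) ≤ θ then (1 : ℝ) else 0) - mstar θ (X ω)) ∂P = 0 := by
    intro θ
    have hRXY : Measurable (fun ω => R (X ω, Y ω)) := hR.comp (hX.prodMk hY)
    have hRmeas : Measurable (fun ω => (if R (X ω, Y ω) ≤ θ then (1:ℝ) else 0)) :=
      Measurable.ite (measurableSet_le hRXY measurable_const) measurable_const measurable_const
    have hRbd : ∀ ω, |(if R (X ω, Y ω) ≤ θ then (1:ℝ) else 0)| ≤ 1 := by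
      intro ω; split <;> norm_num
    set f1 : Ω → ℝ := fun ω => (if T ω then (0:ℝ) else 1) *
      (if R (X ω, Y ω) ≤ θ then (1:ℝ) else 0) * Real.exp (-(γs (X ω, Y ω))) with hf1_def
    set f0 : Ω → ℝ := fun ω => (if T ω then (0:ℝ) else 1) *
      Real.exp (-(γs (X ω, Y ω))) with hf0_def
    set g : Ω → ℝ := fun ω => Real.exp (-(η (X ω))) with hg_def
    set gm : Ω → ℝ := fun ω => Real.exp (-(η (X ω))) * mstar θ (X ω) with hgm_def
    have hf1int : Integrable f1 P := by
      refine hint.bdd_mul (c := 1) ((hTmeas.mul hRmeas).aestronglyMeasurable) (ae_of_all _ fun ω => ?_)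
      simp only [norm_mul, Real.norm_eq_abs]
      calc |(if T ω then (0:ℝ) else 1)| * |(if R (X ω, Y ω) ≤ θ then (1:ℝ) else 0)|
          ≤ 1 * 1 := mul_le_mul (hTbd ω) (hRbd ω) (abs_nonneg _) zero_le_one
        _ = 1 := one_mul 1
    have hgSM : StronglyMeasurable[MeasurableSpace.comap X inferInstance] g :=
      Measurable.stronglyMeasurable (((hηmeas.comp hXc).neg).exp)
    have hgmSM : StronglyMeasurable[MeasurableSpace.comap X inferInstance] gm :=
      Measurable.stronglyMeasurable
        ((((hηmeas.comp hXc).neg).exp).mul ((hmsmeas θ).comp hXc))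
    have hgmbd : ∀ ω, ‖gm ω‖ ≤ Real.exp C := by
      intro ω
      simp only [hgm_def, norm_mul]
      calc ‖Real.exp (-(η (X ω)))‖ * ‖mstar θ (X ω)‖
          ≤ Real.exp C * 1 := by
            refine mul_le_mul (hgbd ω) ?_ (norm_nonneg _) (le_of_lt (Real.exp_pos C))
            rw [Real.norm_eq_abs, abs_le]
            exact ⟨le_trans (by norm_num) (hmsbd θ (X ω)).1, (hmsbd θ (X ω)).2⟩
        _ = Real.exp C := mul_one _
    have h1 : P[g * f1 | MeasurableSpace.comap X inferInstance]
        =ᵐ[P] g * P[f1 | MeasurableSpace.comap X inferInstance] :=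
      condExp_stronglyMeasurable_mul_of_bound hm hgSM hf1int (Real.exp C)
        (ae_of_all _ fun ω => hgbd ω)
    have h0 : P[gm * f0 | MeasurableSpace.comap X inferInstance]
        =ᵐ[P] gm * P[f0 | MeasurableSpace.comap X inferInstance] :=
      condExp_stronglyMeasurable_mul_of_bound hm hgmSM hf0int (Real.exp C)
        (ae_of_all _ fun ω => hgmbd ω)
    have hI1 : ∫ ω, (g * f1) ω ∂P
        = ∫ ω, (g * P[f1 | MeasurableSpace.comap X inferInstance]) ω ∂P := by
      rw [← integral_condExp hm (f := g * f1)]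
      exact integral_congr_ae h1
    have hI0 : ∫ ω, (gm * f0) ω ∂P
        = ∫ ω, (gm * P[f0 | MeasurableSpace.comap X inferInstance]) ω ∂P := by
      rw [← integral_condExp hm (f := gm * f0)]
      exact integral_congr_ae h0
    have heq : (g * P[f1 | MeasurableSpace.comap X inferInstance])
        =ᵐ[P] (gm * P[f0 | MeasurableSpace.comap X inferInstance]) := by
      filter_upwards [htilt θ] with ω hω
      simp only [Pi.mul_apply, hg_def, hgm_def]
      rw [show (P[f1 | MeasurableSpace.comap X inferInstance]) ω
        = mstar θ (X ω) * (P[f0 | MeasurableSpace.comap X inferInstance]) ω from hω]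
      ring
    have hgf1int : Integrable (g * f1) P :=
      hf1int.bdd_mul ((hgSM.mono hm).aestronglyMeasurable) (ae_of_all _ fun ω => hgbd ω)
    have hgmf0int : Integrable (gm * f0) P :=
      hf0int.bdd_mul ((hgmSM.mono hm).aestronglyMeasurable) (ae_of_all _ fun ω => hgmbd ω)
    have hrw : (fun ω => (if T ω then (0 : ℝ) else 1) *
        Real.exp (-(η (X ω)) - γs (X ω, Y ω)) *
        ((if R (X ω, Y ω) ≤ θ then (1 : ℝ) else 0) - mstar θ (X ω)))
        = fun ω => (g * f1) ω - (gm * f0) ω := by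
      funext ω
      simp only [Pi.mul_apply, hg_def, hgm_def, hf1_def, hf0_def]
      rw [show -(η (X ω)) - γs (X ω, Y ω) = -(η (X ω)) + -(γs (X ω, Y ω)) by ring,
        Real.exp_add]
      ring
    rw [hrw, integral_sub hgf1int hgmf0int, hI1, hI0, integral_congr_ae heq, sub_self]
  refine ⟨key, fun θ => ?_⟩
  -- second part
  set s : Set Ω := {ω | T ω = true} with hs_def
  have hsT : MeasurableSet s := hT (measurableSet_singleton true)
  set c : ℝ := 1 - α with hc_def
  set p : ℝ := (P s).toReal with hp_def
  have hp_pos : 0 < p := ENNReal.toReal_pos (ne_of_gt hT1) (measure_ne_top P _)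
  -- integrability of the first summand
  have hAmeas : Measurable (fun ω => (if T ω then (0 : ℝ) else 1) *
      Real.exp (-(η (X ω)) - γs (X ω, Y ω)) *
      ((if R (X ω, Y ω) ≤ θ then (1 : ℝ) else 0) - mstar θ (X ω))) := by
    have hRXY : Measurable (fun ω => R (X ω, Y ω)) := hR.comp (hX.prodMk hY)
    have hRmeas : Measurable (fun ω => (if R (X ω, Y ω) ≤ θ then (1:ℝ) else 0)) :=
      Measurable.ite (measurableSet_le hRXY measurable_const) measurable_const measurable_const
    exact (hTmeas.mul (((hηmeas.comp hX).neg.sub (hγmeas.comp (hX.prodMk hY))).exp)).mul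
      (hRmeas.sub ((hmsmeas θ).comp hX))
  have hAint : Integrable (fun ω => (if T ω then (0 : ℝ) else 1) *
      Real.exp (-(η (X ω)) - γs (X ω, Y ω)) *
      ((if R (X ω, Y ω) ≤ θ then (1 : ℝ) else 0) - mstar θ (X ω))) P := by
    refine Integrable.mono' ((hint.const_mul (2 * Real.exp C)))
      hAmeas.aestronglyMeasurable (ae_of_all _ fun ω => ?_)
    rw [show -(η (X ω)) - γs (X ω, Y ω) = -(η (X ω)) + -(γs (X ω, Y ω)) by ring,
      Real.exp_add]
    simp only [Real.norm_eq_abs, abs_mul]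
    have h1 : |(if T ω then (0:ℝ) else 1)| ≤ 1 := hTbd ω
    have h2 : |Real.exp (-(η (X ω)))| ≤ Real.exp C := by
      simpa [Real.norm_eq_abs] using hgbd ω
    have h3 : |(if R (X ω, Y ω) ≤ θ then (1:ℝ) else 0) - mstar θ (X ω)| ≤ 2 := by
      have hb1 := (hmsbd θ (X ω)).1
      have hb2 := (hmsbd θ (X ω)).2
      rw [abs_le]; constructor <;> split <;> nlinarith
    have h4 : (0:ℝ) < Real.exp (-(γs (X ω, Y ω))) := Real.exp_pos _
    calc |(if T ω then (0:ℝ) else 1)| * (|Real.exp (-(η (X ω)))| * |Real.exp (-(γs (X ω, Y ω)))|)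
          * |(if R (X ω, Y ω) ≤ θ then (1:ℝ) else 0) - mstar θ (X ω)|
        ≤ 1 * (Real.exp C * Real.exp (-(γs (X ω, Y ω)))) * 2 := by
          rw [abs_of_pos h4]
          gcongr
      _ = 2 * Real.exp C * Real.exp (-(γs (X ω, Y ω))) := by ring
  -- integrability of the second summand
  have hBint : Integrable (fun ω => (if T ω then (1:ℝ) else 0) *
      (mstar θ (X ω) - c)) P := by
    refine Integrable.mono' (integrable_const (1 + |c|))
      ((hT1meas.mul (((hmsmeas θ).comp hX).sub measurable_const)).aestronglyMeasurable)
      (ae_of_all _ fun ω => ?_)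
    simp only [Real.norm_eq_abs, abs_mul]
    have h1 : |(if T ω then (1:ℝ) else 0)| ≤ 1 := by split <;> norm_num
    have h2 : |mstar θ (X ω) - c| ≤ 1 + |c| := by
      have hb1 := (hmsbd θ (X ω)).1
      have hb2 := (hmsbd θ (X ω)).2
      have := abs_sub (mstar θ (X ω)) c
      calc |mstar θ (X ω) - c| ≤ |mstar θ (X ω)| + |c| := abs_sub _ _
        _ ≤ 1 + |c| := by rw [abs_of_nonneg hb1]; linarith
    calc |(if T ω then (1:ℝ) else 0)| * |mstar θ (X ω) - c|
        ≤ 1 * (1 + |c|) := by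
          refine mul_le_mul h1 h2 (abs_nonneg _) zero_le_one
      _ = 1 + |c| := one_mul _
  rw [integral_add hAint hBint, key θ, zero_add]
  -- rewrite second summand as an indicator
  have hBind : (fun ω => (if T ω then (1:ℝ) else 0) * (mstar θ (X ω) - c))
      = s.indicator (fun ω => mstar θ (X ω) - c) := by
    funext ω
    rw [Set.indicator_apply]
    by_cases h : T ω = true
    · simp [hs_def, h]
    · simp [hs_def, h]
  have hmsint : IntegrableOn (fun ω => mstar θ (X ω)) s P := by
    refine Integrable.integrableOn ?_
    refine Integrable.mono' (integrable_const 1)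
      (((hmsmeas θ).comp hX).aestronglyMeasurable) (ae_of_all _ fun ω => ?_)
    rw [Real.norm_eq_abs, abs_of_nonneg (hmsbd θ (X ω)).1]
    exact (hmsbd θ (X ω)).2
  rw [hBind, integral_indicator hsT,
    integral_sub hmsint (integrableOn_const (measure_lt_top P s).ne),
    setIntegral_const]
  have hp_ne : p ≠ 0 := ne_of_gt hp_pos
  rw [smul_eq_mul, measureReal_def, ← hp_def]
  field_simp
end
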